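/- arXiv:math/0601497 — 6 statements merged into one kernel-verified Lean document; each statement's English description precedes it below -/
import Mathlib

section
/- For every n ≥ 2 and every k ≥ 1, there exists a polynomial bijection f : ℂⁿ → ℂⁿ with polynomial inverse whose fixed point set consists of exactly k points. -/
open MvPolynomial

/-- A map `ℂⁿ → ℂⁿ` is polynomial if each coordinate is given by a multivariate
polynomial in the coordinates. -/
def IsPolynomialMap {n : ℕ} (f : (Fin n → ℂ) → (Fin n → ℂ)) : Prop :=
  ∃ P : Fin n → MvPolynomial (Fin n) ℂ, ∀ z i, f z i = MvPolynomial.eval z (P i)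

/-- For every `n ≥ 2` and `k ≥ 1` there is a polynomial automorphism
of `ℂⁿ` (polynomial bijection with polynomial inverse) with exactly `k` fixed points. -/
theorem stmt_2 (n k : ℕ) (hn : 2 ≤ n) (hk : 1 ≤ k) :
    ∃ f g : (Fin n → ℂ) → (Fin n → ℂ),
      IsPolynomialMap f ∧ IsPolynomialMap g ∧
      Function.LeftInverse g f ∧ Function.RightInverse g f ∧
      {z | f z = z}.encard = k := by
  have h0 : 0 < n := by omega
  have h1 : 1 < n := by omega
  set i0 : Fin n := ⟨0, h0⟩ with hi0
  set i1 : Fin n := ⟨1, h1⟩ with hi1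
  have hne : i0 ≠ i1 := by simp [hi0, hi1, Fin.ext_iff]
  have hne' : i1 ≠ i0 := hne.symm
  set q : ℂ → ℂ := fun c => ∏ j ∈ Finset.range k, (c - (j : ℂ)) with hq
  set f : (Fin n → ℂ) → (Fin n → ℂ) :=
    fun z i => if i = i0 then z i1 else if i = i1 then z i0 + q (z i1) else 2 * z i with hf
  set g : (Fin n → ℂ) → (Fin n → ℂ) :=
    fun w i => if i = i0 then w i1 - q (w i0) else if i = i1 then w i0 else (1/2) * w i with hg
  refine ⟨f, g, ?_, ?_, ?_, ?_, ?_⟩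
  · refine ⟨fun i => if i = i0 then X i1 else if i = i1 then
      X i0 + ∏ j ∈ Finset.range k, (X i1 - C (j : ℂ)) else C 2 * X i, fun z i => ?_⟩
    by_cases h : i = i0
    · simp [hf, h, hne']
    · by_cases h' : i = i1
      · simp [hf, h, h', hne', hq, map_prod]
      · simp [hf, h, h']
  · refine ⟨fun i => if i = i0 then X i1 - ∏ j ∈ Finset.range k, (X i0 - C (j : ℂ)) else
      if i = i1 then X i0 else C (1/2) * X i, fun z i => ?_⟩
    by_cases h : i = i0
    · simp [hg, h, hq, map_prod]
    · by_cases h' : i = i1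
      · simp [hg, h, h', hne']
      · simp [hg, h, h']
  · intro z
    funext i
    by_cases h : i = i0
    · simp [hf, hg, h, hne, hne']
    · by_cases h' : i = i1
      · simp [hf, hg, h, h', hne, hne']
      · simp [hf, hg, h, h', hne, hne']
        try ring
  · intro w
    funext i
    by_cases h : i = i0
    · simp [hf, hg, h, hne, hne']
    · by_cases h' : i = i1
      · simp [hf, hg, h, h', hne, hne']
      · simp [hf, hg, h, h', hne, hne']
        try ring
  · -- fixed point set
    set φ : ℂ → (Fin n → ℂ) := fun c i => if i = i0 ∨ i = i1 then c else 0 with hφ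
    have hset : {z | f z = z} = φ '' {c | q c = 0} := by
      ext z
      simp only [Set.mem_setOf_eq, Set.mem_image]
      constructor
      · intro h
        have e0 : z i1 = z i0 := by simpa [hf, hne'] using congrFun h i0
        have e1 : z i0 + q (z i1) = z i1 := by simpa [hf, hne, hne'] using congrFun h i1
        refine ⟨z i0, ?_, ?_⟩
        · rw [e0] at e1
          linear_combination e1
        · funext i
          by_cases hi : i = i0
          · simp [hφ, hi]
          · by_cases hi' : i = i1
            · simp [hφ, hi, hi', e0]
            · have h2 : 2 * z i = z i := by simpa [hf, hi, hi'] using congrFun h i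
              have hz : z i = 0 := by linear_combination h2
              simp [hφ, hi, hi', hz]
      · rintro ⟨c, hc, rfl⟩
        funext i
        by_cases hi : i = i0
        · simp [hf, hφ, hi, hne']
        · by_cases hi' : i = i1
          · simp [hf, hφ, hi, hi', hne, hne', hc]
          · simp [hf, hφ, hi, hi']
    rw [hset]
    have hroots : {c : ℂ | q c = 0} = ↑((Finset.range k).image (Nat.cast : ℕ → ℂ)) := by
      ext c
      simp only [hq, Set.mem_setOf_eq, Finset.coe_image, Set.mem_image, Finset.mem_coe,
        Finset.mem_range, Finset.prod_eq_zero_iff, sub_eq_zero]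
      constructor
      · rintro ⟨j, hj, rfl⟩
        exact ⟨j, by simpa using hj, rfl⟩
      · rintro ⟨j, hj, rfl⟩
        exact ⟨j, by simpa using hj, rfl⟩
    have hinj : Set.InjOn φ {c | q c = 0} := by
      intro a _ b _ hab
      have := congrFun hab i0
      simpa [hφ] using this
    rw [hinj.encard_image, hroots, Set.encard_coe_eq_coe_finsetCard,
      Finset.card_image_of_injective _ Nat.cast_injective, Finset.card_range]
end

section
/- Let n ≥ 2 and let p₁,…,p_k be k distinct points in ℂⁿ. Then there exists a polynomial automorphism g of ℂⁿ whose fixed point set is exactly {p₁,…,p_k}. -/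
namespace Stmt3

variable {n : ℕ}

lemma mv_aeval_eq (z : Fin n → ℂ) (q : MvPolynomial (Fin n) ℂ) :
    MvPolynomial.aeval z q = MvPolynomial.eval z q := by
  rw [MvPolynomial.aeval_def, Algebra.algebraMap_self, MvPolynomial.eval₂_id]

lemma isPolyMap_comp {f g : (Fin n → ℂ) → (Fin n → ℂ)}
    (hf : IsPolynomialMap f) (hg : IsPolynomialMap g) :
    IsPolynomialMap (fun z => f (g z)) := by
  obtain ⟨P, hP⟩ := hf
  obtain ⟨Q, hQ⟩ := hg
  refine ⟨fun i => MvPolynomial.bind₁ Q (P i), fun z i => ?_⟩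
  have h1 : g z = fun j => MvPolynomial.eval z (Q j) := funext (hQ z)
  have h2 := MvPolynomial.aeval_bind₁ (R := ℂ) (S := ℂ) z Q (P i)
  simp only [mv_aeval_eq] at h2
  show f (g z) i = _
  rw [hP, h1, ← h2]

lemma eval_polyAeval (z : Fin n → ℂ) (w : MvPolynomial (Fin n) ℂ) (q : Polynomial ℂ) :
    MvPolynomial.eval z (Polynomial.aeval w q) = Polynomial.eval (MvPolynomial.eval z w) q := by
  rw [← mv_aeval_eq, ← Polynomial.aeval_algHom_apply, mv_aeval_eq]
  rw [← Polynomial.coe_aeval_eq_eval]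

def i0 (hn : 2 ≤ n) : Fin n := ⟨0, by omega⟩
def i1 (hn : 2 ≤ n) : Fin n := ⟨1, by omega⟩

lemma i1_ne_i0 (hn : 2 ≤ n) : i1 hn ≠ i0 hn := by simp [i0, i1, Fin.ext_iff]

lemma i0_ne_i1 (hn : 2 ≤ n) : i0 hn ≠ i1 hn := (i1_ne_i0 hn).symm

/-- sum over coordinates other than `i0`. -/
noncomputable def S' (hn : 2 ≤ n) (t : ℂ) (z : Fin n → ℂ) : ℂ :=
  (Finset.univ.erase (i0 hn)).sum fun m => t ^ (m : ℕ) * z m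

lemma S'_congr (hn : 2 ≤ n) (t : ℂ) {z w : Fin n → ℂ}
    (h : ∀ m, m ≠ i0 hn → w m = z m) : S' hn t w = S' hn t z :=
  Finset.sum_congr rfl fun m hm => by rw [h m (Finset.mem_erase.mp hm).1]

noncomputable def LM (hn : 2 ≤ n) (t : ℂ) (z : Fin n → ℂ) : Fin n → ℂ :=
  fun j => if j = i0 hn then z (i0 hn) + S' hn t z else z j

noncomputable def LMinv (hn : 2 ≤ n) (t : ℂ) (z : Fin n → ℂ) : Fin n → ℂ :=
  fun j => if j = i0 hn then z (i0 hn) - S' hn t z else z j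

lemma LMinv_LM (hn : 2 ≤ n) (t : ℂ) (z : Fin n → ℂ) : LMinv hn t (LM hn t z) = z := by
  have hS : S' hn t (LM hn t z) = S' hn t z :=
    S'_congr hn t fun m hm => by simp [LM, hm]
  funext j
  by_cases hj : j = i0 hn
  · subst hj; simp [LM, LMinv, hS]
  · simp [LM, LMinv, hj]

lemma LM_LMinv (hn : 2 ≤ n) (t : ℂ) (z : Fin n → ℂ) : LM hn t (LMinv hn t z) = z := by
  have hS : S' hn t (LMinv hn t z) = S' hn t z :=
    S'_congr hn t fun m hm => by simp [LMinv, hm]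
  funext j
  by_cases hj : j = i0 hn
  · subst hj; simp [LM, LMinv, hS]
  · simp [LM, LMinv, hj]

noncomputable def PH (hn : 2 ≤ n) (c : Fin n → Polynomial ℂ) (z : Fin n → ℂ) : Fin n → ℂ :=
  fun j => if j = i0 hn then z (i0 hn) else z j - (c j).eval (z (i0 hn))

noncomputable def PHinv (hn : 2 ≤ n) (c : Fin n → Polynomial ℂ) (z : Fin n → ℂ) : Fin n → ℂ :=
  fun j => if j = i0 hn then z (i0 hn) else z j + (c j).eval (z (i0 hn))

lemma PHinv_PH (hn : 2 ≤ n) (c : Fin n → Polynomial ℂ) (z : Fin n → ℂ) :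
    PHinv hn c (PH hn c z) = z := by
  funext j
  by_cases hj : j = i0 hn
  · subst hj; simp [PH, PHinv]
  · simp [PH, PHinv, hj]

lemma PH_PHinv (hn : 2 ≤ n) (c : Fin n → Polynomial ℂ) (z : Fin n → ℂ) :
    PH hn c (PHinv hn c z) = z := by
  funext j
  by_cases hj : j = i0 hn
  · subst hj; simp [PH, PHinv]
  · simp [PH, PHinv, hj]

noncomputable def E1 (hn : 2 ≤ n) (z : Fin n → ℂ) : Fin n → ℂ :=
  fun j => if j = i0 hn then z (i0 hn) + z (i1 hn) else z j

noncomputable def E1inv (hn : 2 ≤ n) (z : Fin n → ℂ) : Fin n → ℂ :=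
  fun j => if j = i0 hn then z (i0 hn) - z (i1 hn) else z j

lemma E1inv_E1 (hn : 2 ≤ n) (z : Fin n → ℂ) : E1inv hn (E1 hn z) = z := by
  funext j
  by_cases hj : j = i0 hn
  · subst hj; simp [E1, E1inv, i1_ne_i0 hn]
  · simp [E1, E1inv, hj]

lemma E1_E1inv (hn : 2 ≤ n) (z : Fin n → ℂ) : E1 hn (E1inv hn z) = z := by
  funext j
  by_cases hj : j = i0 hn
  · subst hj; simp [E1, E1inv, i1_ne_i0 hn]
  · simp [E1, E1inv, hj]

noncomputable def E2 (hn : 2 ≤ n) (π : Polynomial ℂ) (z : Fin n → ℂ) : Fin n → ℂ :=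
  fun j => if j = i1 hn then 2 * z (i1 hn) - π.eval (z (i0 hn)) else z j

noncomputable def E2inv (hn : 2 ≤ n) (π : Polynomial ℂ) (z : Fin n → ℂ) : Fin n → ℂ :=
  fun j => if j = i1 hn then (z (i1 hn) + π.eval (z (i0 hn))) / 2 else z j

lemma E2inv_E2 (hn : 2 ≤ n) (π : Polynomial ℂ) (z : Fin n → ℂ) :
    E2inv hn π (E2 hn π z) = z := by
  funext j
  by_cases hj : j = i1 hn
  · subst hj; simp [E2, E2inv, i0_ne_i1 hn]; try ring
  · simp [E2, E2inv, hj]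

lemma E2_E2inv (hn : 2 ≤ n) (π : Polynomial ℂ) (z : Fin n → ℂ) :
    E2 hn π (E2inv hn π z) = z := by
  funext j
  by_cases hj : j = i1 hn
  · subst hj; simp [E2, E2inv, i0_ne_i1 hn]; try ring
  · simp [E2, E2inv, hj]

noncomputable def E3 (hn : 2 ≤ n) (z : Fin n → ℂ) : Fin n → ℂ :=
  fun j => if j = i0 hn ∨ j = i1 hn then z j else 2 * z j

noncomputable def E3inv (hn : 2 ≤ n) (z : Fin n → ℂ) : Fin n → ℂ :=
  fun j => if j = i0 hn ∨ j = i1 hn then z j else z j / 2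

lemma E3inv_E3 (hn : 2 ≤ n) (z : Fin n → ℂ) : E3inv hn (E3 hn z) = z := by
  funext j
  by_cases hj : j = i0 hn ∨ j = i1 hn
  · simp [E3, E3inv, hj]
  · simp [E3, E3inv, hj]; try ring

lemma E3_E3inv (hn : 2 ≤ n) (z : Fin n → ℂ) : E3 hn (E3inv hn z) = z := by
  funext j
  by_cases hj : j = i0 hn ∨ j = i1 hn
  · simp [E3, E3inv, hj]
  · simp [E3, E3inv, hj]; try ring

/- Polynomiality of the pieces -/

lemma poly_LM (hn : 2 ≤ n) (t : ℂ) : IsPolynomialMap (LM hn t) := by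
  refine ⟨fun j => if j = i0 hn then MvPolynomial.X (i0 hn) +
      (Finset.univ.erase (i0 hn)).sum (fun m => MvPolynomial.C (t ^ (m : ℕ)) * MvPolynomial.X m)
    else MvPolynomial.X j, fun z j => ?_⟩
  by_cases hj : j = i0 hn
  · subst hj
    simp [LM, S', map_sum]
  · simp [LM, hj]

lemma poly_LMinv (hn : 2 ≤ n) (t : ℂ) : IsPolynomialMap (LMinv hn t) := by
  refine ⟨fun j => if j = i0 hn then MvPolynomial.X (i0 hn) -
      (Finset.univ.erase (i0 hn)).sum (fun m => MvPolynomial.C (t ^ (m : ℕ)) * MvPolynomial.X m)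
    else MvPolynomial.X j, fun z j => ?_⟩
  by_cases hj : j = i0 hn
  · subst hj
    simp [LMinv, S', map_sum]
  · simp [LMinv, hj]

lemma poly_PH (hn : 2 ≤ n) (c : Fin n → Polynomial ℂ) : IsPolynomialMap (PH hn c) := by
  refine ⟨fun j => if j = i0 hn then MvPolynomial.X (i0 hn)
    else MvPolynomial.X j - Polynomial.aeval (MvPolynomial.X (i0 hn)) (c j), fun z j => ?_⟩
  by_cases hj : j = i0 hn
  · subst hj; simp [PH]
  · simp [PH, hj, eval_polyAeval]

lemma poly_PHinv (hn : 2 ≤ n) (c : Fin n → Polynomial ℂ) : IsPolynomialMap (PHinv hn c) := by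
  refine ⟨fun j => if j = i0 hn then MvPolynomial.X (i0 hn)
    else MvPolynomial.X j + Polynomial.aeval (MvPolynomial.X (i0 hn)) (c j), fun z j => ?_⟩
  by_cases hj : j = i0 hn
  · subst hj; simp [PHinv]
  · simp [PHinv, hj, eval_polyAeval]

lemma poly_E1 (hn : 2 ≤ n) : IsPolynomialMap (E1 hn) := by
  refine ⟨fun j => if j = i0 hn then MvPolynomial.X (i0 hn) + MvPolynomial.X (i1 hn)
    else MvPolynomial.X j, fun z j => ?_⟩
  by_cases hj : j = i0 hn
  · subst hj; simp [E1]
  · simp [E1, hj]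

lemma poly_E1inv (hn : 2 ≤ n) : IsPolynomialMap (E1inv hn) := by
  refine ⟨fun j => if j = i0 hn then MvPolynomial.X (i0 hn) - MvPolynomial.X (i1 hn)
    else MvPolynomial.X j, fun z j => ?_⟩
  by_cases hj : j = i0 hn
  · subst hj; simp [E1inv]
  · simp [E1inv, hj]

lemma poly_E2 (hn : 2 ≤ n) (π : Polynomial ℂ) : IsPolynomialMap (E2 hn π) := by
  refine ⟨fun j => if j = i1 hn then MvPolynomial.C 2 * MvPolynomial.X (i1 hn) -
      Polynomial.aeval (MvPolynomial.X (i0 hn)) π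
    else MvPolynomial.X j, fun z j => ?_⟩
  by_cases hj : j = i1 hn
  · subst hj; simp [E2, eval_polyAeval]
  · simp [E2, hj]

lemma poly_E2inv (hn : 2 ≤ n) (π : Polynomial ℂ) : IsPolynomialMap (E2inv hn π) := by
  refine ⟨fun j => if j = i1 hn then MvPolynomial.C (1 / 2 : ℂ) *
      (MvPolynomial.X (i1 hn) + Polynomial.aeval (MvPolynomial.X (i0 hn)) π)
    else MvPolynomial.X j, fun z j => ?_⟩
  by_cases hj : j = i1 hn
  · subst hj; simp [E2inv, eval_polyAeval]; ring
  · simp [E2inv, hj]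

lemma poly_E3 (hn : 2 ≤ n) : IsPolynomialMap (E3 hn) := by
  refine ⟨fun j => if j = i0 hn ∨ j = i1 hn then MvPolynomial.X j
    else MvPolynomial.C 2 * MvPolynomial.X j, fun z j => ?_⟩
  by_cases hj : j = i0 hn ∨ j = i1 hn
  · simp [E3, hj]
  · simp [E3, hj]

lemma poly_E3inv (hn : 2 ≤ n) : IsPolynomialMap (E3inv hn) := by
  refine ⟨fun j => if j = i0 hn ∨ j = i1 hn then MvPolynomial.X j
    else MvPolynomial.C (1 / 2 : ℂ) * MvPolynomial.X j, fun z j => ?_⟩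
  by_cases hj : j = i0 hn ∨ j = i1 hn
  · simp [E3inv, hj]
  · simp [E3inv, hj]; ring

lemma sum_split (hn : 2 ≤ n) (t : ℂ) (z : Fin n → ℂ) :
    z (i0 hn) + S' hn t z = Finset.univ.sum fun m : Fin n => t ^ (m : ℕ) * z m := by
  have h0 : ((i0 hn : Fin n) : ℕ) = 0 := rfl
  rw [← Finset.add_sum_erase Finset.univ (fun m : Fin n => t ^ (m : ℕ) * z m)
    (Finset.mem_univ (i0 hn))]
  simp only [h0, pow_zero, one_mul]
  rfl

end Stmt3

open Stmt3 in
/-- Given `k` distinct points `p₁,…,p_k` in `ℂⁿ`, `n ≥ 2`, there is a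
polynomial automorphism `g` of `ℂⁿ` whose fixed point set is exactly `{p₁,…,p_k}`. -/
theorem stmt_3 (n k : ℕ) (hn : 2 ≤ n) (p : Fin k → (Fin n → ℂ))
    (hp : Function.Injective p) :
    ∃ g ginv : (Fin n → ℂ) → (Fin n → ℂ),
      IsPolynomialMap g ∧ IsPolynomialMap ginv ∧
      Function.LeftInverse ginv g ∧ Function.RightInverse ginv g ∧
      {z | g z = z} = Set.range p := by
  classical
  -- the separating parameter t
  set D : Fin k × Fin k → Polynomial ℂ :=
    fun q => Finset.univ.sum fun m : Fin n =>
      Polynomial.C (p q.1 m - p q.2 m) * Polynomial.X ^ (m : ℕ) with hD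
  have hDne : ∀ q : Fin k × Fin k, p q.1 ≠ p q.2 → D q ≠ 0 := by
    intro q hq
    obtain ⟨m₀, hm₀⟩ := Function.ne_iff.mp hq
    have hc : (D q).coeff (m₀ : ℕ) = p q.1 m₀ - p q.2 m₀ := by
      simp [hD, Polynomial.finset_sum_coeff, sub_mul, Polynomial.coeff_sub,
        Polynomial.coeff_C_mul, Polynomial.coeff_X_pow, Fin.val_inj]
    intro h0
    rw [h0, Polynomial.coeff_zero] at hc
    exact hm₀ (sub_eq_zero.mp hc.symm)
  obtain ⟨t, ht⟩ : ∃ t : ℂ, t ∉ ⋃ q : Fin k × Fin k,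
      {x : ℂ | (D q).IsRoot x ∧ p q.1 ≠ p q.2} := by
    apply Set.Finite.exists_notMem
    apply Set.finite_iUnion
    intro q
    by_cases hq : p q.1 = p q.2
    · have : {x : ℂ | (D q).IsRoot x ∧ p q.1 ≠ p q.2} = ∅ := by
        ext x; simp [hq]
      rw [this]; exact Set.finite_empty
    · exact (Polynomial.finite_setOf_isRoot (hDne q hq)).subset fun x hx => hx.1
  -- the first coordinates
  set a : Fin k → ℂ := fun i => Finset.univ.sum fun m : Fin n => t ^ (m : ℕ) * p i m with ha_def
  have ha : Function.Injective a := by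
    intro i j hij
    by_contra hne
    have hpne : p i ≠ p j := fun h => hne (hp h)
    apply ht
    refine Set.mem_iUnion.mpr ⟨(i, j), ?_, hpne⟩
    show (D (i, j)).eval t = 0
    have hev : (D (i, j)).eval t =
        Finset.univ.sum fun m : Fin n => (p i m - p j m) * t ^ (m : ℕ) := by
      simp [hD, Polynomial.eval_finset_sum]
    rw [hev]
    have h2 : ∀ m : Fin n, (p i m - p j m) * t ^ (m : ℕ)
        = t ^ (m : ℕ) * p i m - t ^ (m : ℕ) * p j m := fun m => by ring
    rw [Finset.sum_congr rfl fun m _ => h2 m, Finset.sum_sub_distrib]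
    rw [show Finset.univ.sum (fun m : Fin n => t ^ (m : ℕ) * p i m) = a i from rfl,
      show Finset.univ.sum (fun m : Fin n => t ^ (m : ℕ) * p j m) = a j from rfl, hij, sub_self]
  -- interpolation polynomials
  set c : Fin n → Polynomial ℂ :=
    fun j => Lagrange.interpolate Finset.univ a fun i => p i j with hc_def
  have hc : ∀ i j, (c j).eval (a i) = p i j := fun i j =>
    Lagrange.eval_interpolate_at_node (fun i => p i j) (ha.injOn) (Finset.mem_univ i)
  -- the vanishing polynomial
  set π : Polynomial ℂ := Finset.univ.prod fun i : Fin k => Polynomial.X - Polynomial.C (a i)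
    with hπ_def
  have hπ : ∀ x : ℂ, π.eval x = 0 ↔ ∃ i, x = a i := by
    intro x
    rw [hπ_def, Polynomial.eval_prod, Finset.prod_eq_zero_iff]
    constructor
    · rintro ⟨i, -, hi⟩
      simp only [Polynomial.eval_sub, Polynomial.eval_X, Polynomial.eval_C, sub_eq_zero] at hi
      exact ⟨i, hi⟩
    · rintro ⟨i, hi⟩
      exact ⟨i, Finset.mem_univ i, by simp [hi]⟩
  -- the conjugating map and its inverse
  set ψ : (Fin n → ℂ) → (Fin n → ℂ) := fun z => PH hn c (LM hn t z) with hψ_def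
  set ψinv : (Fin n → ℂ) → (Fin n → ℂ) := fun z => LMinv hn t (PHinv hn c z) with hψinv_def
  have hψinvψ : ∀ z, ψinv (ψ z) = z := fun z => by
    rw [hψ_def, hψinv_def]; simp only
    rw [PHinv_PH, LMinv_LM]
  have hψψinv : ∀ z, ψ (ψinv z) = z := fun z => by
    rw [hψ_def, hψinv_def]; simp only
    rw [LM_LMinv, PH_PHinv]
  -- the core map
  set H : (Fin n → ℂ) → (Fin n → ℂ) := fun z => E2 hn π (E1 hn (E3 hn z)) with hH_def
  set Hinv : (Fin n → ℂ) → (Fin n → ℂ) := fun z => E3inv hn (E1inv hn (E2inv hn π z))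
    with hHinv_def
  have hHinvH : ∀ z, Hinv (H z) = z := fun z => by
    rw [hH_def, hHinv_def]; simp only
    rw [E2inv_E2, E1inv_E1, E3inv_E3]
  have hHHinv : ∀ z, H (Hinv z) = z := fun z => by
    rw [hH_def, hHinv_def]; simp only
    rw [E3_E3inv, E1_E1inv, E2_E2inv]
  -- ψ maps p i to q i
  set q : Fin k → (Fin n → ℂ) := fun i j => if j = i0 hn then a i else 0 with hq_def
  have hψp : ∀ i, ψ (p i) = q i := by
    intro i
    funext j
    have hLM0 : LM hn t (p i) (i0 hn) = a i := by
      simp only [LM, if_pos rfl]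
      rw [sum_split hn t (p i), ha_def]
      simp
    rw [hψ_def, hq_def]
    simp only
    by_cases hj : j = i0 hn
    · subst hj
      simp only [if_pos rfl]
      simp [PH, hLM0]
    · simp only [if_neg hj]
      simp only [PH, if_neg hj, hLM0]
      rw [show LM hn t (p i) j = p i j from by simp [LM, hj], hc]
      ring
  -- fixed points of H are exactly the q i
  have hfixH : ∀ w : Fin n → ℂ, H w = w ↔ ∃ i, w = q i := by
    intro w
    constructor
    · intro hw
      have h0 := congrFun hw (i0 hn)
      have h1 := congrFun hw (i1 hn)
      have hcoord : ∀ j, H w j = if j = i0 hn then w (i0 hn) + w (i1 hn)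
          else if j = i1 hn then 2 * w (i1 hn) - π.eval (w (i0 hn) + w (i1 hn))
          else 2 * w j := by
        intro j
        by_cases hj0 : j = i0 hn
        · subst hj0
          simp [hH_def, E1, E2, E3, i0_ne_i1 hn]
        · by_cases hj1 : j = i1 hn
          · subst hj1
            simp [hH_def, E1, E2, E3, i1_ne_i0 hn]
          · simp [hH_def, E1, E2, E3, hj0, hj1]
      rw [hcoord, if_pos rfl] at h0
      have hw1 : w (i1 hn) = 0 := by linear_combination h0
      rw [hcoord, if_neg (i1_ne_i0 hn), if_pos rfl, hw1] at h1
      have hroot : π.eval (w (i0 hn)) = 0 := by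
        have : 2 * 0 - π.eval (w (i0 hn) + 0) = 0 := h1
        simpa using this
      obtain ⟨i, hi⟩ := (hπ _).mp hroot
      refine ⟨i, funext fun j => ?_⟩
      by_cases hj0 : j = i0 hn
      · subst hj0; rw [hq_def]; simpa using hi
      · rw [hq_def]; simp only [if_neg hj0]
        by_cases hj1 : j = i1 hn
        · subst hj1; exact hw1
        · have := congrFun hw j
          rw [hcoord, if_neg hj0, if_neg hj1] at this
          linear_combination this
    · rintro ⟨i, rfl⟩
      funext j
      have hq0 : q i (i0 hn) = a i := by rw [hq_def]; simp
      have hq1 : q i (i1 hn) = 0 := by rw [hq_def]; simp [i1_ne_i0 hn]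
      have hπa : π.eval (a i) = 0 := (hπ (a i)).mpr ⟨i, rfl⟩
      rw [hH_def]
      simp only
      by_cases hj0 : j = i0 hn
      · subst hj0
        simp [E1, E2, E3, i0_ne_i1 hn, hq0, hq1]
      · by_cases hj1 : j = i1 hn
        · subst hj1
          simp [E1, E2, E3, i1_ne_i0 hn, hq0, hq1, hπa]
        · have : q i j = 0 := by rw [hq_def]; simp [hj0]
          simp [E1, E2, E3, hj0, hj1, this]
  -- assemble
  refine ⟨fun z => ψinv (H (ψ z)), fun z => ψinv (Hinv (ψ z)), ?_, ?_, ?_, ?_, ?_⟩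
  · -- polynomiality of g
    exact isPolyMap_comp (isPolyMap_comp (poly_LMinv hn t) (poly_PHinv hn c))
      (isPolyMap_comp (isPolyMap_comp (poly_E2 hn π)
        (isPolyMap_comp (poly_E1 hn) (poly_E3 hn)))
        (isPolyMap_comp (poly_PH hn c) (poly_LM hn t)))
  · exact isPolyMap_comp (isPolyMap_comp (poly_LMinv hn t) (poly_PHinv hn c))
      (isPolyMap_comp (isPolyMap_comp (poly_E3inv hn)
        (isPolyMap_comp (poly_E1inv hn) (poly_E2inv hn π)))
        (isPolyMap_comp (poly_PH hn c) (poly_LM hn t)))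
  · intro z
    show ψinv (Hinv (ψ (ψinv (H (ψ z))))) = z
    rw [hψψinv, hHinvH, hψinvψ]
  · intro z
    show ψinv (H (ψ (ψinv (Hinv (ψ z))))) = z
    rw [hψψinv, hHHinv, hψinvψ]
  · ext z
    simp only [Set.mem_setOf_eq, Set.mem_range]
    constructor
    · intro hz
      have hz' : ψinv (H (ψ z)) = z := hz
      have hfix : H (ψ z) = ψ z := by
        have := congrArg ψ hz'
        rwa [hψψinv] at this
      obtain ⟨i, hi⟩ := (hfixH (ψ z)).mp hfix
      refine ⟨i, ?_⟩
      have : ψinv (ψ (p i)) = ψinv (ψ z) := by rw [hψp i, ← hi]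
      rw [hψinvψ, hψinvψ] at this
      exact this
    · rintro ⟨i, rfl⟩
      show ψinv (H (ψ (p i))) = p i
      have : H (ψ (p i)) = ψ (p i) := by
        rw [hψp i]
        exact (hfixH (q i)).mpr ⟨i, rfl⟩
      rw [this, hψinvψ]
end

section
/- Let D be the domain ℂ \ ⋃_{n ∈ ℤ} closedBall(n, 1/3). Then for infinitely many points p ∈ D (namely p = k + 1/2 for every k ∈ ℤ), there exists a holomorphic automorphism of D whose fixed point set is exactly {p}. -/
/-- Let `D = ℂ \ ⋃_{n ∈ ℤ} closedBall(n, 1/3)`. For every `k ∈ ℤ`, the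
point `k + 1/2` lies in `D` and is the exact fixed point set of some holomorphic
automorphism of `D`; consequently the set of points `p ∈ D` that are the exact
fixed point set of a holomorphic automorphism of `D` is infinite. -/
theorem stmt_8 (D : Set ℂ)
    (hD : D = {z : ℂ | ∀ n : ℤ, z ∉ Metric.closedBall (n : ℂ) (1/3)}) :
    (∀ k : ℤ, ((k : ℂ) + 1/2) ∈ D ∧
      ∃ f g : ℂ → ℂ, DifferentiableOn ℂ f D ∧ DifferentiableOn ℂ g D ∧
        Set.BijOn f D D ∧ Set.InvOn g f D D ∧
        {z ∈ D | f z = z} = {(k : ℂ) + 1/2}) ∧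
    Set.Infinite {p ∈ D |
      ∃ f g : ℂ → ℂ, DifferentiableOn ℂ f D ∧ DifferentiableOn ℂ g D ∧
        Set.BijOn f D D ∧ Set.InvOn g f D D ∧ {z ∈ D | f z = z} = {p}} := by
  have key : ∀ k : ℤ, ((k : ℂ) + 1/2) ∈ D ∧
      ∃ f g : ℂ → ℂ, DifferentiableOn ℂ f D ∧ DifferentiableOn ℂ g D ∧
        Set.BijOn f D D ∧ Set.InvOn g f D D ∧
        {z ∈ D | f z = z} = {(k : ℂ) + 1/2} := by
    intro k
    have hmem : ((k : ℂ) + 1/2) ∈ D := by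
      rw [hD]
      intro n hn
      rw [Metric.mem_closedBall, Complex.dist_eq] at hn
      rw [show (k : ℂ) + 1/2 - n = (((k : ℝ) + 1/2 - (n : ℝ) : ℝ) : ℂ) by push_cast; ring,
        Complex.norm_real, Real.norm_eq_abs] at hn
      have h2 : (1/2 : ℝ) ≤ |(k : ℝ) + 1/2 - (n : ℝ)| := by
        rcases le_or_gt n k with h | h
        · have : (n : ℝ) ≤ k := by exact_mod_cast h
          rw [abs_of_nonneg (by linarith)]; linarith
        · have : (k : ℝ) + 1 ≤ n := by exact_mod_cast h
          rw [abs_of_nonpos (by linarith)]; linarith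
      linarith
    set f : ℂ → ℂ := fun z => (2 * (k : ℂ) + 1) - z with hf
    have hmaps : ∀ z ∈ D, f z ∈ D := by
      intro z hz
      rw [hD] at hz ⊢
      intro n hn
      apply hz (2 * k + 1 - n)
      rw [Metric.mem_closedBall, Complex.dist_eq] at hn ⊢
      rw [show z - ((2 * k + 1 - n : ℤ) : ℂ) = -(f z - n) by simp [hf]; push_cast; ring,
        norm_neg]
      exact hn
    have hinv : Set.InvOn f f D D :=
      ⟨fun z _ => by simp only [hf]; ring, fun z _ => by simp only [hf]; ring⟩
    have hbij : Set.BijOn f D D := hinv.bijOn hmaps hmaps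
    have hdiff : DifferentiableOn ℂ f D :=
      (differentiable_const _).sub differentiable_id |>.differentiableOn
    refine ⟨hmem, f, f, hdiff, hdiff, hbij, hinv, ?_⟩
    ext z
    simp only [Set.mem_setOf_eq, Set.mem_singleton_iff, hf]
    constructor
    · rintro ⟨-, he⟩
      linear_combination -he/2
    · rintro rfl
      exact ⟨hmem, by ring⟩
  refine ⟨key, ?_⟩
  apply Set.infinite_of_injective_forall_mem (f := fun k : ℤ => (k : ℂ) + 1/2)
  · intro a b h
    have : (a : ℂ) = b := by simpa using h
    exact_mod_cast this
  · intro k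
    exact ⟨(key k).1, (key k).2⟩
end

section
/- Let B = 𝔻 × 𝔻 ⊂ ℂ² (or B the unit ball in ℂ²), and suppose f : B → B is holomorphic, fixes three distinct points a, b, c that do not all lie on one complex affine line. If f fixes pointwise the complex lines through each pair among a, b, c intersected with B, then f is the identity on B. -/
open Metric Set Asymptotics Filter Real

set_option linter.unusedSectionVars false

variable {E : Type*} [NormedAddCommGroup E] [NormedSpace ℂ E] [CompleteSpace E]

/-- Cauchy estimate for coefficients. -/
lemma aux_coeff_bound {h : ℂ → E} {R C : ℝ} (hR : 0 < R)
    (hd : DifferentiableOn ℂ h (closedBall 0 R))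
    (hb : ∀ z ∈ closedBall (0:ℂ) R, ‖h z‖ ≤ C) (n : ℕ) :
    ‖(cauchyPowerSeries h 0 R).coeff n‖ ≤ C / R ^ n := by
  have hC : 0 ≤ C := le_trans (norm_nonneg _) (hb 0 (by simp [hR.le]))
  have h1 : ‖(cauchyPowerSeries h 0 R).coeff n‖ = ‖cauchyPowerSeries h 0 R n‖ :=
    (FormalMultilinearSeries.norm_apply_eq_norm_coef).symm
  rw [h1]
  refine (norm_cauchyPowerSeries_le h 0 R n).trans ?_
  have hcont : Continuous fun θ : ℝ => ‖h (circleMap 0 R θ)‖ := by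
    refine (hd.continuousOn.comp_continuous (continuous_circleMap 0 R) ?_).norm
    intro θ
    have := circleMap_mem_sphere (0:ℂ) hR.le θ
    exact sphere_subset_closedBall this
  have hint : (∫ θ : ℝ in (0)..2 * π, ‖h (circleMap 0 R θ)‖) ≤ ∫ _ : ℝ in (0)..2 * π, C := by
    apply intervalIntegral.integral_mono_on Real.two_pi_pos.le
      (hcont.intervalIntegrable _ _) (intervalIntegrable_const)
    intro θ _
    refine hb _ (sphere_subset_closedBall (circleMap_mem_sphere (0:ℂ) hR.le θ))
  have h2π : (0:ℝ) < 2 * π := Real.two_pi_pos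
  calc ((2 * π)⁻¹ * ∫ θ : ℝ in (0)..2 * π, ‖h (circleMap 0 R θ)‖) * |R|⁻¹ ^ n
      ≤ ((2 * π)⁻¹ * (2 * π * C)) * |R|⁻¹ ^ n := by
        gcongr
        simpa using hint
    _ = C / R ^ n := by
        rw [abs_of_pos hR]
        field_simp
        rw [one_div, inv_pow, mul_assoc, inv_mul_cancel₀ (pow_ne_zero _ hR.ne'), mul_one]

lemma aux_partialSum_zero {p : FormalMultilinearSeries ℂ ℂ E} {k : ℕ}
    (hc : ∀ j < k, p.coeff j = 0) (y : ℂ) : p.partialSum k y = 0 := by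
  unfold FormalMultilinearSeries.partialSum
  refine Finset.sum_eq_zero fun j hj => ?_
  rw [FormalMultilinearSeries.apply_eq_pow_smul_coeff, hc j (Finset.mem_range.mp hj), smul_zero]

/-- Vanishing of low coefficients gives an `O(y^k)` bound. -/
lemma aux_isBigO {h : ℂ → E} {p : FormalMultilinearSeries ℂ ℂ E} {k : ℕ}
    (hp : HasFPowerSeriesAt h p 0) (hc : ∀ j < k, p.coeff j = 0) :
    h =O[nhds 0] fun y => ‖y‖ ^ k := by
  have := hp.isBigO_sub_partialSum_pow k
  refine this.congr' ?_ (by rfl)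
  filter_upwards with y
  rw [aux_partialSum_zero hc, zero_add, sub_zero]

lemma aux_pow_isBigO {j k : ℕ} (hjk : j ≤ k) :
    (fun y : ℂ => ‖y‖ ^ k) =O[nhds 0] fun y => ‖y‖ ^ j := by
  refine IsBigO.of_bound 1 ?_
  have : ∀ᶠ y : ℂ in nhds 0, ‖y‖ ≤ 1 := by
    have : Metric.closedBall (0:ℂ) 1 ∈ nhds (0:ℂ) := Metric.closedBall_mem_nhds _ one_pos
    filter_upwards [this] with y hy using by simpa using hy
  filter_upwards [this] with y hy
  simp only [norm_pow, norm_norm, one_mul]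
  exact pow_le_pow_of_le_one (norm_nonneg _) hy hjk

/-- An `O(y^k)` bound forces vanishing of low coefficients. -/
lemma aux_coeff_eq_zero {h : ℂ → E} {p : FormalMultilinearSeries ℂ ℂ E} {k : ℕ}
    (hp : HasFPowerSeriesAt h p 0) (hb : h =O[nhds 0] fun y => ‖y‖ ^ k) :
    ∀ j < k, p.coeff j = 0 := by
  intro j hj
  induction j using Nat.strong_induction_on with
  | _ j ih =>
  have hps : ∀ y : ℂ, p.partialSum (j+1) y = y ^ j • p.coeff j := by
    intro y
    unfold FormalMultilinearSeries.partialSum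
    rw [Finset.sum_range_succ]
    have : ∀ i ∈ Finset.range j, (p i fun _ => y) = 0 := by
      intro i hi
      rw [FormalMultilinearSeries.apply_eq_pow_smul_coeff,
        ih i (Finset.mem_range.mp hi) ((Finset.mem_range.mp hi).trans hj), smul_zero]
    rw [Finset.sum_eq_zero this, zero_add, FormalMultilinearSeries.apply_eq_pow_smul_coeff]
  have hO : (fun y : ℂ => p j fun _ => y) =O[nhds 0] fun y => ‖y‖ ^ (j + 1) := by
    have h1 : (fun y : ℂ => h (0 + y) - p.partialSum (j+1) y) =O[nhds 0]
        fun y => ‖y‖ ^ (j+1) := hp.isBigO_sub_partialSum_pow (j+1)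
    have h2 : h =O[nhds 0] fun y => ‖y‖ ^ (j+1) :=
      hb.trans (aux_pow_isBigO hj)
    have h3 : (fun y : ℂ => p.partialSum (j+1) y) =O[nhds 0] fun y => ‖y‖ ^ (j+1) := by
      have := h2.sub h1
      refine this.congr' ?_ (by rfl)
      filter_upwards with y
      simp
    refine h3.congr' ?_ (by rfl)
    filter_upwards with y
    rw [hps, FormalMultilinearSeries.apply_eq_pow_smul_coeff]
  have := hO.continuousMultilinearMap_apply_eq_zero (1:ℂ)
  rw [FormalMultilinearSeries.apply_eq_pow_smul_coeff] at this
  simpa using this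

lemma aux_geom_bound {h : ℂ → E} {R : NNReal} {p : FormalMultilinearSeries ℂ ℂ E}
    (hp : HasFPowerSeriesOnBall h p 0 R) {C : ℝ} {k : ℕ} (hC : 0 ≤ C)
    (hR : 0 < (R:ℝ))
    (hcb : ∀ n, ‖p.coeff n‖ ≤ C / (R:ℝ) ^ n) (hv : ∀ j < k, p.coeff j = 0)
    {z : ℂ} (hz : ‖z‖ ≤ (R:ℝ)/2) : ‖h z‖ ≤ (2*C/(R:ℝ)^k) * ‖z‖^k := by
  have hzR : ‖z‖ < (R:ℝ) := lt_of_le_of_lt hz (by linarith)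
  have hmem : z ∈ Metric.eball (0:ℂ) R := by
    rw [mem_emetric_ball_zero_iff]
    exact_mod_cast hzR
  have hsum := hp.hasSum hmem
  rw [zero_add] at hsum
  simp only [FormalMultilinearSeries.apply_eq_pow_smul_coeff] at hsum
  set t : ℕ → E := fun n => z ^ n • p.coeff n with ht
  have hsum2 : HasSum (fun n => t (n + k)) (h z - ∑ i ∈ Finset.range k, t i) :=
    (hasSum_nat_add_iff' k).2 hsum
  have hzero : (∑ i ∈ Finset.range k, t i) = 0 := by
    refine Finset.sum_eq_zero fun i hi => ?_
    simp [ht, hv i (Finset.mem_range.mp hi)]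
  rw [hzero, sub_zero] at hsum2
  set D := C / (R:ℝ)^k * ‖z‖^k with hD
  have hDnn : 0 ≤ D := by positivity
  have htb : ∀ n : ℕ, ‖t (n + k)‖ ≤ D * (1/2)^n := by
    intro n
    have h1 : ‖t (n + k)‖ ≤ ‖z‖ ^ (n+k) * (C / (R:ℝ) ^ (n+k)) := by
      rw [ht]
      simp only [norm_smul, norm_pow]
      gcongr
      exact hcb (n+k)
    refine h1.trans ?_
    have hq : ‖z‖ / (R:ℝ) ≤ 1/2 := by
      rw [div_le_div_iff₀ hR (by norm_num)]
      linarith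
    have : ‖z‖ ^ (n+k) * (C / (R:ℝ) ^ (n+k)) = C * (‖z‖ / (R:ℝ))^k * (‖z‖/(R:ℝ))^n := by
      rw [div_pow, pow_add]
      field_simp
      rw [div_pow, pow_add]
      field_simp
    rw [this, hD]
    have h2 : (‖z‖/(R:ℝ))^n ≤ (1/2)^n :=
      pow_le_pow_left₀ (by positivity) hq n
    calc C * (‖z‖ / (R:ℝ))^k * (‖z‖/(R:ℝ))^n ≤ C * (‖z‖ / (R:ℝ))^k * (1/2)^n := by
          gcongr
      _ = C / (R:ℝ)^k * ‖z‖^k * (1/2)^n := by rw [div_pow]; ring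
  have hsumgeo : Summable fun n : ℕ => D * (1/2:ℝ)^n :=
    (summable_geometric_of_lt_one (by norm_num) (by norm_num)).mul_left D
  have hsumn : Summable fun n => ‖t (n + k)‖ :=
    Summable.of_nonneg_of_le (fun n => norm_nonneg _) htb hsumgeo
  have : ‖h z‖ ≤ ∑' n, ‖t (n + k)‖ := by
    rw [← hsum2.tsum_eq]
    exact norm_tsum_le_tsum_norm hsumn
  refine this.trans ?_
  have : (∑' n, ‖t (n + k)‖) ≤ ∑' n : ℕ, D * (1/2:ℝ)^n := hsumn.tsum_le_tsum htb hsumgeo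
  refine this.trans ?_
  rw [tsum_mul_left, tsum_geometric_of_lt_one (by norm_num) (by norm_num)]
  rw [hD]
  ring_nf
  norm_num

lemma aux_opnorm {F : Type*} [NormedAddCommGroup F] [NormedSpace ℂ F]
    (L : E →L[ℂ] F) {c : ℝ} (hc : 0 ≤ c) (h : ∀ v : E, ‖v‖ = 1 → ‖L v‖ ≤ c) :
    ‖L‖ ≤ c := by
  refine ContinuousLinearMap.opNorm_le_bound L hc fun x => ?_
  rcases eq_or_ne x 0 with rfl | hx
  · simp
  · have hxn : (0:ℝ) < ‖x‖ := norm_pos_iff.mpr hx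
    set u : E := ((‖x‖⁻¹ : ℝ) : ℂ) • x with hu
    have hun : ‖u‖ = 1 := by
      rw [hu, norm_smul]
      simp [abs_of_pos (inv_pos.mpr hxn), inv_mul_cancel₀ hxn.ne']
    have := h u hun
    rw [hu, map_smul, norm_smul] at this
    have h2 : (‖x‖:ℝ)⁻¹ * ‖L x‖ ≤ c := by
      simpa [abs_of_pos (inv_pos.mpr hxn)] using this
    calc ‖L x‖ = ‖x‖ * (‖x‖⁻¹ * ‖L x‖) := by field_simp
      _ ≤ ‖x‖ * c := by gcongr
      _ = c * ‖x‖ := mul_comm _ _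

set_option maxHeartbeats 2000000 in
/-- Cartan's uniqueness theorem, local version. -/
lemma aux_cartan {f : E → E} {U : Set E} (hU : IsOpen U) (hd : DifferentiableOn ℂ f U)
    (hmaps : Set.MapsTo f U U) {a : E} (ha : f a = a)
    {M : ℝ} (hbd : ∀ z ∈ U, ‖z - a‖ ≤ M)
    (hDf : fderiv ℂ f a = ContinuousLinearMap.id ℂ E)
    {r : ℝ} (hr : 0 < r) (hball : closedBall a r ⊆ U) :
    ∀ z ∈ ball a r, f z = z := by
  have haU : a ∈ U := hball (mem_closedBall_self hr.le)
  have hM0 : 0 ≤ M := by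
    have := hbd a haU
    simp only [sub_self, norm_zero] at this
    exact this
  set C : ℝ := 2 * M with hCdef
  have hC0 : 0 ≤ C := by positivity
  -- iterates
  have hmapsm : ∀ m, Set.MapsTo (f^[m]) U U := fun m => hmaps.iterate m
  have hdm : ∀ m, DifferentiableOn ℂ (f^[m]) U := by
    intro m
    induction m with
    | zero => simpa using differentiableOn_id
    | succ m ih =>
      rw [Function.iterate_succ']
      exact hd.comp ih (hmapsm m)
  have ham : ∀ m, f^[m] a = a := fun m => Function.iterate_fixed ha m
  -- slices
  set sl : ℕ → E → ℂ → E := fun m v w => f^[m] (a + w • v) - (a + w • v) with hsl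
  have hslbd : ∀ m v, ‖v‖ = 1 → ∀ w : ℂ, ‖w‖ ≤ r → ‖sl m v w‖ ≤ C := by
    intro m v hv w hw
    have hz : a + w • v ∈ U := by
      apply hball
      simp only [mem_closedBall, dist_eq_norm, add_sub_cancel_left, norm_smul, hv, mul_one]
      exact hw
    have h1 : ‖f^[m] (a + w • v) - a‖ ≤ M := hbd _ (hmapsm m hz)
    have h2 : ‖(a + w • v) - a‖ ≤ M := hbd _ hz
    calc ‖sl m v w‖ = ‖(f^[m] (a + w • v) - a) - ((a + w • v) - a)‖ := by
          rw [hsl]; congr 1; abel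
      _ ≤ ‖f^[m] (a + w • v) - a‖ + ‖(a + w • v) - a‖ := norm_sub_le _ _
      _ ≤ M + M := add_le_add h1 h2
      _ = C := by rw [hCdef]; ring
  have hsld : ∀ m v, ‖v‖ = 1 → DifferentiableOn ℂ (sl m v) (closedBall 0 r) := by
    intro m v hv
    have hin : DifferentiableOn ℂ (fun w : ℂ => a + w • v) (closedBall 0 r) :=
      ((differentiable_id.smul_const v).const_add a).differentiableOn
    have hmapsin : Set.MapsTo (fun w : ℂ => a + w • v) (closedBall 0 r) U := by
      intro w hw
      apply hball
      simp only [mem_closedBall, dist_eq_norm, add_sub_cancel_left, norm_smul, hv, mul_one]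
      simpa [dist_eq_norm] using hw
    exact ((hdm m).comp hin hmapsin).sub hin
  set Rn : NNReal := ⟨r, hr.le⟩ with hRn
  have hRnr : (Rn : ℝ) = r := rfl
  have hRnpos : 0 < Rn := by
    rw [← NNReal.coe_lt_coe, hRnr]; exact hr
  set q : ℕ → E → FormalMultilinearSeries ℂ ℂ E :=
    fun m v => cauchyPowerSeries (sl m v) 0 r with hq
  have hqb : ∀ m v, ‖v‖ = 1 → HasFPowerSeriesOnBall (sl m v) (q m v) 0 Rn := by
    intro m v hv
    exact DifferentiableOn.hasFPowerSeriesOnBall (R := Rn) (hsld m v hv) hRnpos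
  have hqcb : ∀ m v, ‖v‖ = 1 → ∀ n, ‖(q m v).coeff n‖ ≤ C / r ^ n := by
    intro m v hv n
    exact aux_coeff_bound hr (hsld m v hv)
      (fun z hz => hslbd m v hv z (by simpa [dist_eq_norm] using hz)) n
  -- derivative of slices
  have hderiv_slice : ∀ (g : E → E) (z : E) (v : E), DifferentiableAt ℂ g z →
      HasDerivAt (fun w : ℂ => g (z + w • v)) (fderiv ℂ g z v) 0 := by
    intro g z v hg
    have hin : HasDerivAt (fun w : ℂ => z + w • v) v 0 := by
      simpa using ((hasDerivAt_id (0:ℂ)).smul_const v).const_add z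
    have h0 : z + (0:ℂ) • v = z := by simp
    have hl : HasFDerivAt g (fderiv ℂ g z) (z + (0:ℂ) • v) := by
      rw [h0]; exact hg.hasFDerivAt
    exact hl.comp_hasDerivAt 0 hin
  -- coefficient 0 vanishes
  have hcoeff0 : ∀ m v, ‖v‖ = 1 → (q m v).coeff 0 = 0 := by
    intro m v hv
    have h := ((hqb m v hv).hasFPowerSeriesAt).coeff_zero (fun _ => (1:ℂ))
    have h2 : sl m v 0 = 0 := by simp [hsl, ham m]
    show (q m v) 0 1 = 0
    rw [show (1 : Fin 0 → ℂ) = fun _ => (1:ℂ) from rfl, h, h2]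
  -- coefficient 1 of the first slice vanishes
  have hcoeff1 : ∀ v, ‖v‖ = 1 → (q 1 v).coeff 1 = 0 := by
    intro v hv
    have hfd : DifferentiableAt ℂ f a := hd.differentiableAt (hU.mem_nhds haU)
    have h1 : HasDerivAt (fun w : ℂ => f (a + w • v)) (fderiv ℂ f a v) 0 :=
      hderiv_slice f a v hfd
    have h2 : HasDerivAt (fun w : ℂ => a + w • v) v 0 := by
      simpa using ((hasDerivAt_id (0:ℂ)).smul_const v).const_add a
    have h3 : HasDerivAt (sl 1 v) (fderiv ℂ f a v - v) 0 := by
      have := h1.sub h2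
      simp only [hsl, Function.iterate_one]
      exact this
    have h5 := ((hqb 1 v hv).hasFPowerSeriesAt).deriv
    have h6 : fderiv ℂ f a v = v := by rw [hDf]; rfl
    show (q 1 v) 1 1 = 0
    rw [show (1 : Fin 1 → ℂ) = fun _ => (1:ℂ) from rfl, ← h5, h3.deriv, h6, sub_self]
  -- main claim: all coefficients of the first slice vanish
  suffices hall : ∀ j, ∀ v, ‖v‖ = 1 → (q 1 v).coeff j = 0 by
    intro z hz
    rcases eq_or_ne z a with rfl | hza
    · exact ha
    · set s : ℝ := ‖z - a‖ with hs
      have hspos : 0 < s := norm_pos_iff.mpr (sub_ne_zero.mpr hza)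
      set v : E := ((s⁻¹ : ℝ) : ℂ) • (z - a) with hvdef
      have hv : ‖v‖ = 1 := by
        rw [hvdef, norm_smul, Complex.norm_real, Real.norm_eq_abs,
          abs_of_pos (inv_pos.mpr hspos), ← hs, inv_mul_cancel₀ hspos.ne']
      have hzz : a + ((s : ℝ) : ℂ) • v = z := by
        rw [hvdef, smul_smul, ← Complex.ofReal_mul, mul_inv_cancel₀ hspos.ne',
          Complex.ofReal_one, one_smul, add_sub_cancel]
      have hmem : ((s : ℝ) : ℂ) ∈ Metric.eball (0:ℂ) Rn := by
        rw [mem_emetric_ball_zero_iff]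
        have : ‖((s : ℝ) : ℂ)‖ < r := by
          rw [Complex.norm_real, Real.norm_eq_abs, abs_of_pos hspos]
          simpa [hs, dist_eq_norm] using hz
        exact_mod_cast this
      have hsum := (hqb 1 v hv).hasSum hmem
      simp only [FormalMultilinearSeries.apply_eq_pow_smul_coeff, hall _ v hv, smul_zero] at hsum
      have h0 : sl 1 v (0 + ((s : ℝ) : ℂ)) = 0 := hsum.unique hasSum_zero
      rw [zero_add] at h0
      simp only [hsl, Function.iterate_one] at h0
      rw [hzz] at h0
      exact sub_eq_zero.mp h0
  by_contra hnot
  push_neg at hnot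
  obtain ⟨j0, v0', hv0', hne0⟩ := hnot
  have hex : ∃ j, ¬ ∀ v, ‖v‖ = 1 → (q 1 v).coeff j = 0 := ⟨j0, by push_neg; exact ⟨v0', hv0', hne0⟩⟩
  classical
  set k := Nat.find hex with hkdef
  have hkspec : ¬ ∀ v, ‖v‖ = 1 → (q 1 v).coeff k = 0 := Nat.find_spec hex
  push_neg at hkspec
  obtain ⟨v0, hv0, hx⟩ := hkspec
  have hkmin : ∀ j < k, ∀ v, ‖v‖ = 1 → (q 1 v).coeff j = 0 := by
    intro j hj
    have := Nat.find_min hex hj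
    push_neg at this
    exact this
  have hk2 : 2 ≤ k := by
    by_contra hklt
    push_neg at hklt
    interval_cases k
    · exact hx (hcoeff0 1 v0 hv0)
    · exact hx (hcoeff1 v0 hv0)
  -- uniform bound on g = f - id near a
  set A : ℝ := 2*C/r^k with hAdef
  have hA0 : 0 ≤ A := by positivity
  have hgb : ∀ z ∈ closedBall a (r/2), ‖f z - z‖ ≤ A * ‖z - a‖^k := by
    intro z hz
    rcases eq_or_ne z a with rfl | hza
    · simp only [ha, sub_self, norm_zero]
      positivity
    · set s : ℝ := ‖z - a‖ with hs
      have hspos : 0 < s := norm_pos_iff.mpr (sub_ne_zero.mpr hza)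
      set v : E := ((s⁻¹ : ℝ) : ℂ) • (z - a) with hvdef
      have hv : ‖v‖ = 1 := by
        rw [hvdef, norm_smul, Complex.norm_real, Real.norm_eq_abs,
          abs_of_pos (inv_pos.mpr hspos), ← hs, inv_mul_cancel₀ hspos.ne']
      have hzz : a + ((s : ℝ) : ℂ) • v = z := by
        rw [hvdef, smul_smul, ← Complex.ofReal_mul, mul_inv_cancel₀ hspos.ne',
          Complex.ofReal_one, one_smul, add_sub_cancel]
      have hnorms : ‖((s : ℝ) : ℂ)‖ = s := by
        rw [Complex.norm_real, Real.norm_eq_abs, abs_of_pos hspos]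
      have hsr : ‖((s : ℝ) : ℂ)‖ ≤ (Rn:ℝ)/2 := by
        rw [hnorms, hRnr]
        simpa [hs, dist_eq_norm] using hz
      have := aux_geom_bound (hqb 1 v hv) hC0 (by rw [hRnr]; exact hr)
        (by rw [hRnr]; exact hqcb 1 v hv) (fun j hj => hkmin j hj v hv) hsr
      rw [hRnr] at this
      have heq : sl 1 v (((s : ℝ) : ℂ)) = f z - z := by
        simp only [hsl, Function.iterate_one]
        rw [hzz]
      rw [heq, hnorms] at this
      exact this
  -- derivative bound for g = f - id
  set g : E → E := fun z => f z - z with hgdef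
  have hgd : ∀ z ∈ U, DifferentiableAt ℂ g z := fun z hz =>
    (hd.differentiableAt (hU.mem_nhds hz)).sub differentiableAt_id
  have hfderg : fderiv ℂ g a = 0 := by
    have hf1 : HasFDerivAt f (ContinuousLinearMap.id ℂ E) a := by
      have := (hd.differentiableAt (hU.mem_nhds haU)).hasFDerivAt
      rwa [hDf] at this
    have h1 := hf1.sub (hasFDerivAt_id a)
    rw [sub_self] at h1
    exact h1.fderiv
  have hdg : ∀ z ∈ ball a (r/8), ‖fderiv ℂ g z‖ ≤ (A * 2^k) * ‖z - a‖^(k-1) := by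
    intro z hz
    rcases eq_or_ne z a with rfl | hza
    · rw [hfderg]
      simp only [norm_zero]
      positivity
    · set s : ℝ := ‖z - a‖ with hs
      have hspos : 0 < s := norm_pos_iff.mpr (sub_ne_zero.mpr hza)
      have hs8 : s < r/8 := by simpa [hs, dist_eq_norm] using hz
      have hzU : closedBall z s ⊆ closedBall a (r/2) := by
        intro ξ hξ
        simp only [mem_closedBall, dist_eq_norm] at hξ ⊢
        calc ‖ξ - a‖ ≤ ‖ξ - z‖ + ‖z - a‖ := by
              have := norm_add_le (ξ - z) (z - a)
              simpa [sub_add_sub_cancel] using this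
          _ ≤ s + s := add_le_add hξ le_rfl
          _ ≤ r/2 := by linarith
      have hzU2 : closedBall z s ⊆ U := fun ξ hξ =>
        hball (closedBall_subset_closedBall (by linarith) (hzU hξ))
      -- slice of g at z
      have hkey : ∀ u : E, ‖u‖ = 1 → ‖fderiv ℂ g z u‖ ≤ (A * 2^k) * s^(k-1) := by
        intro u hu
        set gz : ℂ → E := fun w => g (z + w • u) with hgz
        have hmapsin : Set.MapsTo (fun w : ℂ => z + w • u) (closedBall 0 s) (closedBall z s) := by
          intro w hw
          simp only [mem_closedBall, dist_eq_norm, add_sub_cancel_left, norm_smul, hu, mul_one]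
          simpa [dist_eq_norm] using hw
        have hgzd : DifferentiableOn ℂ gz (closedBall 0 s) := by
          have hin : DifferentiableOn ℂ (fun w : ℂ => z + w • u) (closedBall 0 s) :=
            ((differentiable_id.smul_const u).const_add z).differentiableOn
          have : DifferentiableOn ℂ g (closedBall z s) := fun ξ hξ =>
            (hgd ξ (hzU2 hξ)).differentiableWithinAt
          exact this.comp hin hmapsin
        have hgzb : ∀ w ∈ closedBall (0:ℂ) s, ‖gz w‖ ≤ A * (2*s)^k := by
          intro w hw
          have h1 : z + w • u ∈ closedBall a (r/2) := hzU (hmapsin hw)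
          have h2 := hgb _ h1
          have h3 : ‖(z + w • u) - a‖ ≤ 2*s := by
            calc ‖(z + w • u) - a‖ = ‖(z - a) + w • u‖ := by congr 1; abel
              _ ≤ ‖z - a‖ + ‖w • u‖ := norm_add_le _ _
              _ ≤ s + s := by
                  refine add_le_add le_rfl ?_
                  rw [norm_smul, hu, mul_one]
                  simpa [dist_eq_norm] using hw
              _ = 2*s := by ring
          calc ‖gz w‖ ≤ A * ‖(z + w • u) - a‖^k := h2
            _ ≤ A * (2*s)^k := by gcongr
        have hcb := aux_coeff_bound hspos hgzd hgzb 1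
        have hderiv : deriv gz 0 = fderiv ℂ g z u := (hderiv_slice g z u (hgd z (hzU2 (mem_closedBall_self hspos.le)))).deriv
        set Sn : NNReal := ⟨s, hspos.le⟩ with hSn
        have hser : HasFPowerSeriesOnBall gz (cauchyPowerSeries gz 0 s) 0 Sn :=
          DifferentiableOn.hasFPowerSeriesOnBall (R := Sn) hgzd
            (by rw [← NNReal.coe_lt_coe]; exact hspos)
        have hder2 := hser.hasFPowerSeriesAt.deriv
        have : ‖fderiv ℂ g z u‖ ≤ A * (2*s)^k / s^1 := by
          rw [← hderiv, hder2]
          exact hcb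
        refine this.trans (le_of_eq ?_)
        rw [mul_pow, pow_one]
        rw [show s^k = s^(k-1) * s by rw [← pow_succ]; congr 1; omega]
        field_simp
      exact aux_opnorm _ (by positivity) hkey
  -- the key induction on iterates
  have key : ∀ m : ℕ, ∀ v, ‖v‖ = 1 →
      (∀ j < k, (q m v).coeff j = 0) ∧ (q m v).coeff k = m • (q 1 v).coeff k := by
    intro m
    induction m with
    | zero =>
      intro v hv
      have hz0 : HasFPowerSeriesAt (0 : ℂ → E) (q 0 v) 0 := by
        apply ((hqb 0 v hv).hasFPowerSeriesAt).congr
        filter_upwards with w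
        simp [hsl]
      have hq0 := hz0.eq_zero
      constructor
      · intro j hj
        rw [hq0]
        rfl
      · rw [hq0, zero_smul]
        rfl
    | succ m ih =>
      intro v hv
      obtain ⟨ihv, ihk⟩ := ih v hv
      have hρO : (sl m v) =O[nhds 0] (fun w => ‖w‖^k) :=
        aux_isBigO (hqb m v hv).hasFPowerSeriesAt ihv
      obtain ⟨Cρ, hCρ0, hCρ⟩ := hρO.exists_pos
      rw [isBigOWith_iff] at hCρ
      set ε : ℝ := min (min 1 Cρ⁻¹) (r/32) with hε
      have hεpos : 0 < ε := by
        refine lt_min (lt_min one_pos (inv_pos.mpr hCρ0)) (by linarith)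
      have hδb : ∀ᶠ w : ℂ in nhds 0,
          ‖sl (m+1) v w - sl m v w - sl 1 v w‖ ≤ (A*2^k*2^(k-1)*Cρ) * ‖w‖^(k+1) := by
        filter_upwards [Metric.closedBall_mem_nhds (0:ℂ) hεpos, hCρ] with w hwball hwρ
        simp only [mem_closedBall, dist_zero_right] at hwball
        have hw1 : ‖w‖ ≤ 1 := hwball.trans ((min_le_left _ _).trans (min_le_left _ _))
        have hwC : ‖w‖ ≤ Cρ⁻¹ := hwball.trans ((min_le_left _ _).trans (min_le_right _ _))
        have hwr : ‖w‖ ≤ r/32 := hwball.trans (min_le_right _ _)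
        have hρw : ‖sl m v w‖ ≤ Cρ * ‖w‖^k := by
          simpa using hwρ
        have hρw2 : ‖sl m v w‖ ≤ ‖w‖ := by
          have h1 : ‖w‖^(k-1) ≤ ‖w‖ := by
            calc ‖w‖^(k-1) ≤ ‖w‖^1 := pow_le_pow_of_le_one (norm_nonneg _) hw1 (by omega)
              _ = ‖w‖ := pow_one _
          calc ‖sl m v w‖ ≤ Cρ * ‖w‖^k := hρw
            _ = Cρ * ‖w‖^(k-1) * ‖w‖ := by
                rw [mul_assoc, ← pow_succ, show k - 1 + 1 = k from by omega]
            _ ≤ Cρ * Cρ⁻¹ * ‖w‖ := by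
                gcongr
                exact (h1.trans hwC)
            _ = ‖w‖ := by rw [mul_inv_cancel₀ hCρ0.ne', one_mul]
        set x : E := a + w • v with hxdef
        set y : E := f^[m] x with hydef
        have hyx : y - x = sl m v w := rfl
        have hxball : x ∈ closedBall a (2*‖w‖) := by
          simp only [mem_closedBall, dist_eq_norm, hxdef, add_sub_cancel_left, norm_smul, hv,
            mul_one]
          nlinarith [norm_nonneg w]
        have hyball : y ∈ closedBall a (2*‖w‖) := by
          simp only [mem_closedBall, dist_eq_norm]
          calc ‖y - a‖ ≤ ‖y - x‖ + ‖x - a‖ := by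
                have := norm_add_le (y - x) (x - a)
                simpa [sub_add_sub_cancel] using this
            _ ≤ ‖w‖ + ‖w‖ := by
                refine add_le_add ?_ ?_
                · rw [hyx]; exact hρw2
                · simp only [hxdef, add_sub_cancel_left, norm_smul, hv, mul_one, le_refl]
            _ = 2*‖w‖ := by ring
        have hsubball : closedBall a (2*‖w‖) ⊆ ball a (r/8) := by
          intro ξ hξ
          simp only [mem_closedBall, mem_ball] at hξ ⊢
          calc dist ξ a ≤ 2*‖w‖ := hξ
            _ ≤ 2*(r/32) := by linarith
            _ < r/8 := by linarith
        have hsubU : closedBall a (2*‖w‖) ⊆ U := by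
          intro ξ hξ
          refine hball (closedBall_subset_closedBall ?_ (ball_subset_closedBall (hsubball hξ)))
          linarith
        have hmvt := Convex.norm_image_sub_le_of_norm_fderiv_le (f := g)
          (C := A * 2^k * (2*‖w‖)^(k-1))
          (fun ξ hξ => hgd ξ (hsubU hξ))
          (fun ξ hξ => by
            refine (hdg ξ (hsubball hξ)).trans ?_
            have : ‖ξ - a‖ ≤ 2*‖w‖ := by simpa [dist_eq_norm] using hξ
            gcongr)
          (convex_closedBall a (2*‖w‖)) hxball hyball
        have heqδ : sl (m+1) v w - sl m v w - sl 1 v w = g y - g x := by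
          simp only [hsl, hgdef, hydef, hxdef, Function.iterate_succ_apply',
            Function.iterate_one]
          abel
        rw [heqδ]
        calc ‖g y - g x‖ ≤ (A * 2^k * (2*‖w‖)^(k-1)) * ‖y - x‖ := hmvt
          _ ≤ (A * 2^k * (2*‖w‖)^(k-1)) * (Cρ * ‖w‖^k) := by
              rw [hyx]
              gcongr
          _ = (A*2^k*2^(k-1)*Cρ) * (‖w‖^(k-1) * ‖w‖^k) := by
              rw [mul_pow]
              ring
          _ ≤ (A*2^k*2^(k-1)*Cρ) * ‖w‖^(k+1) := by
              gcongr
              calc ‖w‖^(k-1) * ‖w‖^k = ‖w‖^(k-1+k) := by rw [pow_add]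
                _ ≤ ‖w‖^(k+1) := pow_le_pow_of_le_one (norm_nonneg _) hw1 (by omega)
      have hδO : (fun w => sl (m+1) v w - sl m v w - sl 1 v w) =O[nhds 0]
          fun w => ‖w‖^(k+1) := by
        refine IsBigO.of_bound (A*2^k*2^(k-1)*Cρ) ?_
        filter_upwards [hδb] with w hw
        simpa using hw
      have hsub : HasFPowerSeriesAt (fun w => sl (m+1) v w - sl m v w - sl 1 v w)
          (q (m+1) v - q m v - q 1 v) 0 :=
        ((hqb (m+1) v hv).hasFPowerSeriesAt.sub (hqb m v hv).hasFPowerSeriesAt).sub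
          (hqb 1 v hv).hasFPowerSeriesAt
      have hvan := aux_coeff_eq_zero hsub hδO
      have hcoeffsub : ∀ j, (q (m+1) v - q m v - q 1 v).coeff j =
          (q (m+1) v).coeff j - (q m v).coeff j - (q 1 v).coeff j := fun j => rfl
      constructor
      · intro j hj
        have h1 := hvan j (by omega)
        rw [hcoeffsub] at h1
        rw [ihv j hj, hkmin j hj v hv, sub_zero, sub_zero] at h1
        exact h1
      · have h1 := hvan k (Nat.lt_succ_self k)
        rw [hcoeffsub, ihk] at h1
        have h2 : (q (m+1) v).coeff k = m • (q 1 v).coeff k + (q 1 v).coeff k := by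
          have := sub_eq_zero.mp h1
          rw [sub_eq_iff_eq_add] at this
          rw [this]
          abel
        rw [h2, succ_nsmul]
  -- contradiction
  have hbound : ∀ m : ℕ, (m : ℝ) * ‖(q 1 v0).coeff k‖ ≤ C / r^k := by
    intro m
    have h1 := (key m v0 hv0).2
    have h2 := hqcb m v0 hv0 k
    rw [h1] at h2
    rw [← Nat.cast_smul_eq_nsmul ℝ, norm_smul, Real.norm_natCast] at h2
    exact h2
  have hxpos : 0 < ‖(q 1 v0).coeff k‖ := norm_pos_iff.mpr hx
  obtain ⟨m, hm⟩ := exists_nat_gt ((C / r^k) / ‖(q 1 v0).coeff k‖)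
  have h3 := hbound m
  rw [div_lt_iff₀ hxpos] at hm
  linarith

/-- The complex affine line through two points of `ℂ²`. -/
def cxLine (p q : EuclideanSpace ℂ (Fin 2)) : Set (EuclideanSpace ℂ (Fin 2)) :=
  {z | ∃ l : ℂ, z = p + l • (q - p)}

set_option maxHeartbeats 1000000 in
/-- Let `B` be the open unit ball in `ℂ²` and `f : B → B` holomorphic.
If `f` fixes three distinct points `a, b, c` not all on one complex affine line,
and `f` fixes pointwise the intersections with `B` of the complex lines through
each pair among `a, b, c`, then `f` is the identity on `B`. -/
theorem stmt_10 (B : Set (EuclideanSpace ℂ (Fin 2)))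
    (hB : B = Metric.ball (0 : EuclideanSpace ℂ (Fin 2)) 1)
    (f : EuclideanSpace ℂ (Fin 2) → EuclideanSpace ℂ (Fin 2))
    (hf : DifferentiableOn ℂ f B) (hmaps : Set.MapsTo f B B)
    (a b c : EuclideanSpace ℂ (Fin 2))
    (haB : a ∈ B) (hbB : b ∈ B) (hcB : c ∈ B)
    (hab : a ≠ b) (hbc : b ≠ c) (hac : a ≠ c)
    (hnotline : ¬ ∃ p q : EuclideanSpace ℂ (Fin 2), p ≠ q ∧
      a ∈ cxLine p q ∧ b ∈ cxLine p q ∧ c ∈ cxLine p q)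
    (hfa : f a = a) (hfb : f b = b) (hfc : f c = c)
    (hlines : ∀ z ∈ B,
      (z ∈ cxLine a b ∨ z ∈ cxLine b c ∨ z ∈ cxLine a c) → f z = z) :
    Set.EqOn f id B := by
  have haB' : ‖a‖ < 1 := by rw [hB, mem_ball_zero_iff] at haB; exact haB
  have hUopen : IsOpen B := by rw [hB]; exact isOpen_ball
  -- derivative along fixed directions
  have hdir : ∀ d : EuclideanSpace ℂ (Fin 2), (∀ᶠ w : ℂ in nhds 0, f (a + w • d) = a + w • d) →
      fderiv ℂ f a d = d := by
    intro d hev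
    have hfd : DifferentiableAt ℂ f a := hf.differentiableAt (hUopen.mem_nhds haB)
    have h2 : HasDerivAt (fun w : ℂ => a + w • d) d 0 := by
      simpa using ((hasDerivAt_id (0:ℂ)).smul_const d).const_add a
    have h1 : HasDerivAt (fun w : ℂ => f (a + w • d)) (fderiv ℂ f a d) 0 := by
      have h0 : a + (0:ℂ) • d = a := by simp
      have hl : HasFDerivAt f (fderiv ℂ f a) (a + (0:ℂ) • d) := by
        rw [h0]; exact hfd.hasFDerivAt
      exact hl.comp_hasDerivAt 0 h2
    have h3 : HasDerivAt (fun w : ℂ => a + w • d) (fderiv ℂ f a d) 0 :=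
      h1.congr_of_eventuallyEq (Filter.EventuallyEq.symm hev)
    exact h3.unique h2
  have hev_gen : ∀ p : EuclideanSpace ℂ (Fin 2), (∀ w : ℂ, a + w • (p - a) ∈ cxLine a p) →
      ∀ᶠ w : ℂ in nhds 0, a + w • (p - a) ∈ Metric.ball (0:EuclideanSpace ℂ (Fin 2)) 1 := by
    intro p _
    set ε : ℝ := (1 - ‖a‖)/(‖p - a‖ + 1) with hεdef
    have hεpos : 0 < ε := div_pos (by linarith) (by positivity)
    filter_upwards [Metric.ball_mem_nhds (0:ℂ) hεpos] with w hw
    have hwn : ‖w‖ < ε := by simpa [dist_zero_right] using hw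
    rw [mem_ball_zero_iff]
    calc ‖a + w • (p - a)‖ ≤ ‖a‖ + ‖w • (p - a)‖ := norm_add_le _ _
      _ = ‖a‖ + ‖w‖ * ‖p - a‖ := by rw [norm_smul]
      _ ≤ ‖a‖ + ‖w‖ * (‖p - a‖ + 1) := by
          have := norm_nonneg w
          nlinarith
      _ < ‖a‖ + ε * (‖p - a‖ + 1) := by
          have hpos : (0:ℝ) < ‖p - a‖ + 1 := by positivity
          have := mul_lt_mul_of_pos_right hwn hpos
          linarith
      _ = 1 := by
          rw [hεdef]
          field_simp
          ring
  have hev_b : ∀ᶠ w : ℂ in nhds 0, f (a + w • (b - a)) = a + w • (b - a) := by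
    filter_upwards [hev_gen b (fun w => ⟨w, rfl⟩)] with w hw
    exact hlines _ (by rw [hB]; exact hw) (Or.inl ⟨w, rfl⟩)
  have hev_c : ∀ᶠ w : ℂ in nhds 0, f (a + w • (c - a)) = a + w • (c - a) := by
    filter_upwards [hev_gen c (fun w => ⟨w, rfl⟩)] with w hw
    exact hlines _ (by rw [hB]; exact hw) (Or.inr (Or.inr ⟨w, rfl⟩))
  have hDb : fderiv ℂ f a (b - a) = b - a := hdir _ hev_b
  have hDc : fderiv ℂ f a (c - a) = c - a := hdir _ hev_c
  -- linear independence and the full derivative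
  have hbne : b - a ≠ 0 := sub_ne_zero.mpr (Ne.symm hab)
  have hInd : LinearIndependent ℂ ![b - a, c - a] := by
    rw [LinearIndependent.pair_iff' hbne]
    intro s hcs
    apply hnotline
    refine ⟨a, b, hab, ⟨0, by simp⟩, ⟨1, by simp⟩, ⟨s, ?_⟩⟩
    rw [hcs]
    simp
  have hDfa : fderiv ℂ f a = ContinuousLinearMap.id ℂ (EuclideanSpace ℂ (Fin 2)) := by
    have hcard : Fintype.card (Fin 2) = Module.finrank ℂ (EuclideanSpace ℂ (Fin 2)) := by
      simp [finrank_euclideanSpace_fin]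
    set bas := basisOfLinearIndependentOfCardEqFinrank hInd hcard with hbas
    apply ContinuousLinearMap.ext
    intro v
    have hrepr := bas.sum_repr v
    have hfix : ∀ i : Fin 2, fderiv ℂ f a (bas i) = bas i := by
      intro i
      have hco : bas i = ![b - a, c - a] i := by
        rw [hbas, coe_basisOfLinearIndependentOfCardEqFinrank]
      fin_cases i
      · rw [hco]; simpa using hDb
      · rw [hco]; simpa using hDc
    calc fderiv ℂ f a v = fderiv ℂ f a (∑ i, bas.repr v i • bas i) := by rw [hrepr]
      _ = ∑ i, bas.repr v i • fderiv ℂ f a (bas i) := by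
          rw [map_sum]
          exact Finset.sum_congr rfl fun i _ => by rw [map_smul]
      _ = ∑ i, bas.repr v i • bas i := by
          exact Finset.sum_congr rfl fun i _ => by rw [hfix i]
      _ = v := hrepr
  -- Cartan
  set r : ℝ := (1 - ‖a‖)/2 with hrdef
  have hrpos : 0 < r := by rw [hrdef]; linarith
  have hball : Metric.closedBall a r ⊆ B := by
    intro z hz
    rw [hB, mem_ball_zero_iff]
    have h1 : ‖z - a‖ ≤ r := by simpa [dist_eq_norm] using hz
    have h2 : ‖z‖ ≤ ‖z - a‖ + ‖a‖ := by
      have := norm_add_le (z - a) a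
      simpa using this
    rw [hrdef] at h1
    linarith
  have hbd2 : ∀ z ∈ B, ‖z - a‖ ≤ 2 := by
    intro z hz
    rw [hB, mem_ball_zero_iff] at hz
    have := norm_sub_le z a
    linarith
  have hnear := aux_cartan hUopen hf hmaps hfa hbd2 hDfa hrpos hball
  -- propagation along lines through `a`
  intro w hw
  show f w = id w
  simp only [id]
  set u : EuclideanSpace ℂ (Fin 2) := w - a with hu
  set Λ : Set ℂ := {t : ℂ | a + t • u ∈ B} with hΛ
  have hΛopen : IsOpen Λ := by
    have hcont : Continuous fun t : ℂ => a + t • u :=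
      continuous_const.add (continuous_id.smul continuous_const)
    exact hUopen.preimage hcont
  have hΛconv : Convex ℝ Λ := by
    intro x hx y hy sa sb hsa hsb hsum
    simp only [hΛ, mem_setOf_eq] at hx hy ⊢
    have hcomb : sa • (a + x • u) + sb • (a + y • u) ∈ B := by
      rw [hB] at hx hy ⊢
      exact (convex_ball (0:EuclideanSpace ℂ (Fin 2)) 1) hx hy hsa hsb hsum
    have h1 : (sa • x + sb • y) • u = sa • (x • u) + sb • (y • u) := by
      rw [add_smul, smul_assoc, smul_assoc]
    have h2 : sa • (a + x • u) + sb • (a + y • u) = a + (sa • x + sb • y) • u := by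
      calc sa • (a + x • u) + sb • (a + y • u)
          = (sa • a + sb • a) + (sa • (x • u) + sb • (y • u)) := by
            rw [smul_add, smul_add]; abel
        _ = a + (sa • x + sb • y) • u := by rw [← add_smul, hsum, one_smul, h1]
    rw [← h2]
    exact hcomb
  have hFdiff : DifferentiableOn ℂ (fun t : ℂ => f (a + t • u) - (a + t • u)) Λ := by
    have hin : DifferentiableOn ℂ (fun t : ℂ => a + t • u) Λ :=
      ((differentiable_id.smul_const u).const_add a).differentiableOn
    have hmapsΛ : Set.MapsTo (fun t : ℂ => a + t • u) Λ B := fun t ht => ht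
    exact (hf.comp hin hmapsΛ).sub hin
  have hFan := hFdiff.analyticOnNhd hΛopen
  have h0Λ : (0:ℂ) ∈ Λ := by
    simp only [hΛ, mem_setOf_eq, zero_smul, add_zero]
    exact haB
  have hF0 : (fun t : ℂ => f (a + t • u) - (a + t • u)) =ᶠ[nhds 0] 0 := by
    set ε : ℝ := r/(‖u‖+1) with hεdef
    have hεpos : 0 < ε := div_pos hrpos (by positivity)
    filter_upwards [Metric.ball_mem_nhds (0:ℂ) hεpos] with t ht
    have htn : ‖t‖ < ε := by simpa [dist_zero_right] using ht
    have hmem : a + t • u ∈ Metric.ball a r := by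
      rw [mem_ball_iff_norm]
      have h1 : ‖a + t • u - a‖ = ‖t‖ * ‖u‖ := by
        rw [add_sub_cancel_left, norm_smul]
      rw [h1]
      have hpos : (0:ℝ) < ‖u‖ + 1 := by positivity
      calc ‖t‖ * ‖u‖ ≤ ‖t‖ * (‖u‖ + 1) := by nlinarith [norm_nonneg t]
        _ < ε * (‖u‖ + 1) := mul_lt_mul_of_pos_right htn hpos
        _ = r := by rw [hεdef]; field_simp
    have := hnear _ hmem
    simp [this]
  have heq := hFan.eqOn_zero_of_preconnected_of_eventuallyEq_zero
    hΛconv.isPreconnected h0Λ hF0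
  have h1Λ : (1:ℂ) ∈ Λ := by
    simp only [hΛ, mem_setOf_eq, one_smul, hu, add_sub_cancel]
    exact hw
  have hval := heq h1Λ
  simp only [one_smul, hu, add_sub_cancel, Pi.zero_apply] at hval
  exact sub_eq_zero.mp hval
end

section
/- Let Bⁿ be the open unit ball in ℂⁿ and let f : Bⁿ → Bⁿ be holomorphic with f(0) = 0 and f(a) = a for some a ≠ 0. Then f fixes every point of the set {λa : λ ∈ ℂ, λa ∈ Bⁿ}, i.e., f fixes the intersection with Bⁿ of the complex line through 0 and a. -/
/-- A holomorphic self-map of the unit ball `Bⁿ ⊂ ℂⁿ` fixing `0` and a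
second point `a ≠ 0` fixes every point of the intersection with `Bⁿ` of the
complex line through `0` and `a`. -/
theorem stmt_12 (n : ℕ)
    (f : EuclideanSpace ℂ (Fin n) → EuclideanSpace ℂ (Fin n))
    (hf : DifferentiableOn ℂ f (Metric.ball (0 : EuclideanSpace ℂ (Fin n)) 1))
    (hmaps : Set.MapsTo f (Metric.ball (0 : EuclideanSpace ℂ (Fin n)) 1)
      (Metric.ball (0 : EuclideanSpace ℂ (Fin n)) 1))
    (hf0 : f 0 = 0) (a : EuclideanSpace ℂ (Fin n))
    (haB : a ∈ Metric.ball (0 : EuclideanSpace ℂ (Fin n)) 1) (ha : a ≠ 0)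
    (hfa : f a = a) :
    ∀ l : ℂ, l • a ∈ Metric.ball (0 : EuclideanSpace ℂ (Fin n)) 1 →
      f (l • a) = l • a := by
  intro l hl
  have hr : (0:ℝ) < ‖a‖ := norm_pos_iff.2 ha
  have hr1 : ‖a‖ < 1 := by simpa using haB
  set u : EuclideanSpace ℂ (Fin n) := ((‖a‖ : ℂ))⁻¹ • a with hu
  have hrne : ((‖a‖ : ℂ)) ≠ 0 := by
    simpa using hr.ne'
  have hun : ‖u‖ = 1 := by
    rw [hu, norm_smul]
    simp [abs_of_pos hr, inv_mul_cancel₀ hr.ne']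
  set g : ℂ → EuclideanSpace ℂ (Fin n) := fun z => f (z • u) with hg
  have hmap1 : ∀ z : ℂ, z ∈ Metric.ball (0:ℂ) 1 → z • u ∈ Metric.ball (0:EuclideanSpace ℂ (Fin n)) 1 := by
    intro z hz
    rw [Metric.mem_ball, dist_zero_right, norm_smul, hun, mul_one]
    simpa using hz
  have hgd : DifferentiableOn ℂ g (Metric.ball (0:ℂ) 1) :=
    hf.comp ((differentiable_id.smul_const u).differentiableOn) hmap1
  have hg0 : g 0 = 0 := by simp [hg, hf0]
  have hmap2 : Set.MapsTo g (Metric.ball (0:ℂ) 1) (Metric.ball (g 0) 1) := by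
    rw [hg0]
    intro z hz
    exact hmaps (hmap1 z hz)
  have hru : ((‖a‖ : ℂ)) • u = a := by
    rw [hu, smul_smul, mul_inv_cancel₀ hrne, one_smul]
  have hrball : ((‖a‖ : ℂ)) ∈ Metric.ball (0:ℂ) 1 := by
    rw [Metric.mem_ball, dist_zero_right]
    simpa [abs_of_pos hr] using hr1
  have hds : dslope g 0 ((‖a‖ : ℂ)) = u := by
    rw [dslope_of_ne _ (by simpa using hrne), slope_def_module]
    simp only [hg0, sub_zero, hg]
    rw [hru, hfa, hu]
    simp only [zero_smul, hf0, sub_zero]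
  have heq : ‖dslope g 0 ((‖a‖ : ℂ))‖ = 1 / 1 := by
    rw [hds, hun]; norm_num
  have haff := Complex.affine_of_mapsTo_ball_of_exists_norm_dslope_eq_div hgd (hmap2.mono_right Metric.ball_subset_closedBall)
    hrball heq
  -- now g z = z • u on the ball
  have hz : l * (‖a‖ : ℂ) ∈ Metric.ball (0:ℂ) 1 := by
    rw [Metric.mem_ball, dist_zero_right]
    have : ‖l • a‖ < 1 := by simpa using hl
    rw [norm_smul] at this
    simpa [abs_of_pos hr] using this
  have hgz := haff hz
  have hla : (l * (‖a‖ : ℂ)) • u = l • a := by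
    rw [mul_smul, hru]
  calc f (l • a) = g (l * (‖a‖ : ℂ)) := by rw [hg]; simp [hla]
    _ = l • a := by
        rw [hgz]
        simp only [hg0, hds, sub_zero, zero_add]
        exact hla
end

section
/- Let D ⊂ ℂⁿ be a bounded domain, a ∈ D, and let φ : D → ℂⁿ be a holomorphic map with φ(a) = 0, φ'(a) = id (so φ is biholomorphic near a), satisfying φ ∘ f = f'(a) ∘ φ for all automorphisms f fixing a. If b ∈ D with φ(b) ≠ 0, then every automorphism f of D fixing both a and b has a non-isolated fixed point set: there exists c ≠ a arbitrarily close to a with f(c) = c. -/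
open Metric Set Filter
open scoped Topology NNReal

/-- Along-the-line Schwarz estimate: a vector-valued holomorphic map on a ball that is
bounded by `K` satisfies a Lipschitz-type bound `4K/r` on the quarter ball. -/
lemma schwarz_line_bound {E : Type*} [NormedAddCommGroup E] [NormedSpace ℂ E]
    {ψ : E → E} {a : E} {r K : ℝ} (hr : 0 < r) (hK : 0 < K)
    (hdiff : DifferentiableOn ℂ ψ (ball a r))
    (hbd : ∀ z ∈ ball a r, ‖ψ z‖ < K)
    {x y : E} (hx : x ∈ ball a (r / 4)) (hy : y ∈ ball a (r / 4)) :
    ‖ψ x - ψ y‖ ≤ 4 * K / r * ‖x - y‖ := by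
  rcases eq_or_ne x y with rfl | hne
  · simp [div_nonneg, (by positivity : (0:ℝ) ≤ 4 * K / r)]
  have hd : 0 < ‖x - y‖ := by
    simpa [sub_ne_zero] using hne
  set d := ‖x - y‖ with hdd
  have hdlt : d < r / 2 := by
    have h1 : dist x a < r / 4 := mem_ball.1 hx
    have h2 : dist y a < r / 4 := mem_ball.1 hy
    calc d = dist x y := (dist_eq_norm x y).symm
      _ ≤ dist x a + dist y a := dist_triangle_right x y a
      _ < r / 4 + r / 4 := by linarith
      _ = r / 2 := by ring
  set R₁ : ℝ := (3 * r / 4) / d with hR₁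
  set u : ℂ → E := fun lam => ψ (y + lam • (x - y)) with hu
  have hmem : ∀ lam : ℂ, lam ∈ ball (0 : ℂ) R₁ → y + lam • (x - y) ∈ ball a r := by
    intro lam hlam
    have hlamn : ‖lam‖ < R₁ := by simpa [mem_ball, dist_eq_norm] using hlam
    have : ‖y + lam • (x - y) - a‖ ≤ ‖y - a‖ + ‖lam‖ * d := by
      calc ‖y + lam • (x - y) - a‖ = ‖(y - a) + lam • (x - y)‖ := by
            congr 1
            abel
        _ ≤ ‖y - a‖ + ‖lam • (x - y)‖ := norm_add_le _ _
        _ = ‖y - a‖ + ‖lam‖ * d := by rw [norm_smul]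
    have hya : ‖y - a‖ < r / 4 := by simpa [mem_ball, dist_eq_norm] using hy
    have hlamd : ‖lam‖ * d < 3 * r / 4 := by
      have := (mul_lt_mul_of_pos_right hlamn hd)
      rwa [hR₁, div_mul_cancel₀ _ hd.ne'] at this
    rw [mem_ball, dist_eq_norm]
    linarith
  have hud : DifferentiableOn ℂ u (ball (0 : ℂ) R₁) := by
    apply hdiff.comp
    · intro lam _
      exact (differentiable_const y).add (differentiable_id.smul_const (x - y)) |>.differentiableAt.differentiableWithinAt
    · intro lam hlam
      exact hmem lam hlam
  have hmaps : MapsTo u (ball (0 : ℂ) R₁) (ball (u 0) (2 * K)) := by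
    intro lam hlam
    have h0 : (0 : ℂ) ∈ ball (0 : ℂ) R₁ := by
      rw [mem_ball, dist_self]
      positivity
    have hb1 : ‖u lam‖ < K := hbd _ (hmem lam hlam)
    have hb2 : ‖u 0‖ < K := hbd _ (hmem 0 h0)
    rw [mem_ball, dist_eq_norm]
    calc ‖u lam - u 0‖ ≤ ‖u lam‖ + ‖u 0‖ := norm_sub_le _ _
      _ < 2 * K := by linarith
  have h1mem : (1 : ℂ) ∈ ball (0 : ℂ) R₁ := by
    rw [mem_ball, dist_zero_right, norm_one, hR₁]
    rw [lt_div_iff₀ hd]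
    linarith
  have key := Complex.dist_le_div_mul_dist_of_mapsTo_ball hud (hmaps.mono_right ball_subset_closedBall) h1mem
  have hu1 : u 1 = ψ x := by simp [hu]
  have hu0 : u 0 = ψ y := by simp [hu]
  rw [hu1, hu0, dist_eq_norm] at key
  have hdist1 : dist (1 : ℂ) 0 = 1 := by simp
  rw [hdist1, mul_one] at key
  calc ‖ψ x - ψ y‖ ≤ 2 * K / R₁ := key
    _ = 8 * K * d / (3 * r) := by
      rw [hR₁]
      field_simp
      ring
    _ ≤ 4 * K / r * d := by
      rw [div_le_iff₀ (by positivity : (0:ℝ) < 3 * r)]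
      have : 4 * K / r * d * (3 * r) = 12 * K * d := by field_simp; ring
      rw [this]
      nlinarith [hd.le, hK.le]

/-- Local injectivity and openness at a point where a holomorphic map has derivative `id`. -/
lemma holomorphic_local_inverse {E : Type*} [NormedAddCommGroup E] [NormedSpace ℂ E]
    [CompleteSpace E] {D : Set E} (hDopen : IsOpen D) {a : E} (ha : a ∈ D)
    {φ : E → E} (hφdiff : DifferentiableOn ℂ φ D)
    (hφ' : fderiv ℂ φ a = ContinuousLinearMap.id ℂ E) (hnt : Nontrivial E) :
    ∃ s, s ∈ 𝓝 a ∧ s ⊆ D ∧ IsOpen s ∧ Set.InjOn φ s ∧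
      Filter.map φ (𝓝 a) = 𝓝 (φ a) := by
  set ψ : E → E := fun z => φ z - (z - a) - φ a with hψ
  have hdφ : HasFDerivAt φ (ContinuousLinearMap.id ℂ E) a := by
    have h := (hφdiff.differentiableAt (hDopen.mem_nhds ha)).hasFDerivAt
    rwa [hφ'] at h
  have hlo : (fun z => ψ z) =o[𝓝 a] fun z => z - a := by
    have h := hdφ.isLittleO
    have heq : (fun z => ψ z) = fun z => φ z - φ a - (ContinuousLinearMap.id ℂ E) (z - a) := by
      funext z
      simp [hψ]
      abel
    rw [heq]
    exact h
  have hev : ∀ᶠ z in 𝓝 a, ‖ψ z‖ ≤ (1/16 : ℝ) * ‖z - a‖ := hlo.def (by norm_num)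
  obtain ⟨r, hr0, hrsub⟩ := Metric.mem_nhds_iff.1
    (Filter.inter_mem hev (hDopen.mem_nhds ha))
  have hballD : ball a r ⊆ D := fun z hz => (hrsub hz).2
  have hbdψ : ∀ z ∈ ball a r, ‖ψ z‖ < r / 8 := by
    intro z hz
    have h1 : ‖ψ z‖ ≤ (1/16 : ℝ) * ‖z - a‖ := (hrsub hz).1
    have h2 : ‖z - a‖ < r := by simpa [mem_ball, dist_eq_norm] using hz
    nlinarith [norm_nonneg (ψ z)]
  have hψdiff : DifferentiableOn ℂ ψ (ball a r) := by
    apply DifferentiableOn.sub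
    apply DifferentiableOn.sub (hφdiff.mono hballD)
    · exact (differentiable_id.sub_const a).differentiableOn
    · exact differentiableOn_const _
  have happ : ApproximatesLinearOn φ
      ((ContinuousLinearEquiv.refl ℂ E : E ≃L[ℂ] E) : E →L[ℂ] E)
      (ball a (r / 4)) (1/2 : ℝ≥0) := by
    intro x hx y hy
    have key := schwarz_line_bound hr0 (by positivity : (0:ℝ) < r / 8) hψdiff hbdψ hx hy
    have heq : φ x - φ y - (x - y) = ψ x - ψ y := by simp [hψ]; abel
    have h48 : 4 * (r / 8) / r = 1 / 2 := by field_simp; ring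
    calc ‖φ x - φ y -
          ((ContinuousLinearEquiv.refl ℂ E : E ≃L[ℂ] E) : E →L[ℂ] E) (x - y)‖
        = ‖ψ x - ψ y‖ := by
          rw [ContinuousLinearEquiv.coe_coe, ContinuousLinearEquiv.refl_apply, heq]
      _ ≤ 4 * (r / 8) / r * ‖x - y‖ := key
      _ = ((1/2 : ℝ≥0) : ℝ) * ‖x - y‖ := by rw [h48]; norm_num
  have hchalf : Subsingleton E ∨
      (1/2 : ℝ≥0) < ‖(((ContinuousLinearEquiv.refl ℂ E : E ≃L[ℂ] E)).symm :
        E →L[ℂ] E)‖₊⁻¹ := by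
    right
    have h1 : (((ContinuousLinearEquiv.refl ℂ E).symm) : E →L[ℂ] E) =
        ContinuousLinearMap.id ℂ E := by
      rw [ContinuousLinearEquiv.refl_symm, ContinuousLinearEquiv.coe_refl]
    rw [h1, ContinuousLinearMap.nnnorm_id]
    rw [← NNReal.coe_lt_coe]
    norm_num
  set ploc := happ.toOpenPartialHomeomorph φ (ball a (r / 4)) hchalf isOpen_ball with hploc
  have hsrc : ploc.source = ball a (r / 4) := rfl
  have hcoe : (ploc : E → E) = φ := rfl
  have hasrc : a ∈ ploc.source := by rw [hsrc]; exact mem_ball_self (by positivity)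
  refine ⟨ball a (r / 4), Metric.ball_mem_nhds a (by positivity), ?_, isOpen_ball, ?_, ?_⟩
  · exact fun z hz => hballD (ball_subset_ball (by linarith) hz)
  · have h := ploc.injOn
    rw [hsrc, hcoe] at h
    exact h
  · have h := ploc.map_nhds_eq hasrc
    rw [hcoe] at h
    exact h

/-- `f` is a holomorphic automorphism of the domain `D ⊆ ℂⁿ`: it is holomorphic on
`D`, maps `D` bijectively onto `D`, and has a holomorphic inverse on `D`. -/
def IsAutOf {n : ℕ} (D : Set (EuclideanSpace ℂ (Fin n)))
    (f : EuclideanSpace ℂ (Fin n) → EuclideanSpace ℂ (Fin n)) : Prop :=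
  DifferentiableOn ℂ f D ∧ Set.BijOn f D D ∧
    ∃ g, DifferentiableOn ℂ g D ∧ Set.InvOn g f D D

/-- Let `D ⊂ ℂⁿ` be a bounded domain, `a ∈ D`, and `φ` a Cartan
linearization at `a` (`φ(a) = 0`, `φ'(a) = id`, `φ ∘ f = f'(a) ∘ φ` for all
automorphisms `f` fixing `a`). If `b ∈ D` with `φ(b) ≠ 0`, then every automorphism
`f` fixing `a` and `b` has fixed points `c ≠ a` arbitrarily close to `a`. -/
theorem stmt_18 (n : ℕ) (D : Set (EuclideanSpace ℂ (Fin n)))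
    (hDopen : IsOpen D) (hDconn : IsConnected D) (hDbdd : Bornology.IsBounded D)
    (a : EuclideanSpace ℂ (Fin n)) (ha : a ∈ D)
    (φ : EuclideanSpace ℂ (Fin n) → EuclideanSpace ℂ (Fin n))
    (hφdiff : DifferentiableOn ℂ φ D) (hφa : φ a = 0)
    (hφ' : fderiv ℂ φ a = ContinuousLinearMap.id ℂ (EuclideanSpace ℂ (Fin n)))
    (hequi : ∀ f, IsAutOf D f → f a = a → ∀ ζ ∈ D, φ (f ζ) = fderiv ℂ f a (φ ζ))
    (b : EuclideanSpace ℂ (Fin n)) (hb : b ∈ D) (hφb : φ b ≠ 0) :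
    ∀ f, IsAutOf D f → f a = a → f b = b →
      ∀ ε > 0, ∃ c ∈ D, c ≠ a ∧ dist c a < ε ∧ f c = c := by
  intro f hf hfa hfb ε hε
  rcases subsingleton_or_nontrivial (EuclideanSpace ℂ (Fin n)) with hsub | hnt
  · exact absurd (Subsingleton.elim (φ b) 0) hφb
  have hvD : φ b = fderiv ℂ f a (φ b) := by
    have h := hequi f hf hfa b hb
    rwa [hfb] at h
  obtain ⟨s, hsnhds, hsD, hsopen, hsinj, hmap⟩ :=
    holomorphic_local_inverse hDopen ha hφdiff hφ' hnt
  have hfC : ContinuousAt f a := (hf.1.differentiableAt (hDopen.mem_nhds ha)).continuousAt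
  set V := ball a ε ∩ s ∩ f ⁻¹' s with hVdef
  have hV : V ∈ 𝓝 a := by
    refine Filter.inter_mem (Filter.inter_mem (Metric.ball_mem_nhds a hε) hsnhds) ?_
    have h2 : s ∈ 𝓝 (f a) := by rw [hfa]; exact hsnhds
    exact hfC h2
  have himg : φ '' V ∈ 𝓝 (0 : EuclideanSpace ℂ (Fin n)) := by
    rw [← hφa, ← hmap]
    exact Filter.image_mem_map hV
  have htend : Filter.Tendsto (fun lam : ℂ => lam • φ b) (𝓝 0) (𝓝 0) := by
    have h := (Filter.tendsto_id.smul_const (φ b) : Filter.Tendsto (fun lam : ℂ => lam • φ b)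
      (𝓝 0) (𝓝 ((0:ℂ) • φ b)))
    simpa using h
  have hev2 : ∀ᶠ lam : ℂ in 𝓝[{(0:ℂ)}ᶜ] 0, lam • φ b ∈ φ '' V :=
    Filter.Eventually.filter_mono nhdsWithin_le_nhds (htend.eventually_mem himg)
  have hev3 : ∀ᶠ lam : ℂ in 𝓝[{(0:ℂ)}ᶜ] 0, lam ≠ 0 := by
    filter_upwards [self_mem_nhdsWithin] with lam h using h
  obtain ⟨lam, hlamV, hlamne⟩ := (hev2.and hev3).exists
  obtain ⟨c, hcV, hφc⟩ := hlamV
  obtain ⟨⟨hcball, hcs⟩, hfcs⟩ := hcV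
  have hcD : c ∈ D := hsD hcs
  have hcne : c ≠ a := by
    intro h
    rw [h, hφa] at hφc
    exact smul_ne_zero hlamne hφb hφc.symm
  have hφfc : φ (f c) = φ c := by
    rw [hequi f hf hfa c hcD, hφc, map_smul, ← hvD]
  have hfc : f c = c := hsinj hfcs hcs hφfc
  exact ⟨c, hcD, hcne, by simpa [Metric.mem_ball] using hcball, hfc⟩
end
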